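/- arXiv:1602.03550 — 4 statements merged into one kernel-verified Lean document; each statement's English description precedes it below -/
import Mathlib

section
/- For every n ≥ 1, Σ_{k=⌈n/2⌉}^{n} (1/(n+1)) · C(n+1, k) · C(k, n-k) · c₁^{2k-n} · c₂^{n-k} = Σ_{k=0}^{⌊n/2⌋} C(n, 2k) · C_k · c₁^{n-2k} · c₂^{k}, where C_k = C(2k,k)/(k+1) is the k-th Catalan number. -/
lemma key_nat (n j : ℕ) (hj : 2 * j ≤ n) :
    (j + 1) * ((n + 1).choose (n - j) * (n - j).choose j) =
      (n + 1) * (n.choose (2 * j) * (2 * j).choose j) := by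
  have hjn : j ≤ n := le_trans (Nat.le_mul_of_pos_left j (by norm_num)) hj
  have h1 : (n + 1).choose (n - j) = (n + 1).choose (j + 1) := by
    have : n - j = (n + 1) - (j + 1) := by omega
    rw [this, Nat.choose_symm (by omega)]
  have h2 : (n + 1).choose (j + 1) * (j + 1) = (n + 1) * n.choose j :=
    (Nat.add_one_mul_choose_eq n j).symm
  have h3 : n.choose (2 * j) * (2 * j).choose j = n.choose j * (n - j).choose j := by
    have := Nat.choose_mul (n := n) (k := 2 * j) (s := j)
      (Nat.le_mul_of_pos_left j (by norm_num))
    rw [this, show 2 * j - j = j from by omega]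
  rw [h1, h3]
  calc (j + 1) * ((n + 1).choose (j + 1) * (n - j).choose j)
      = ((n + 1).choose (j + 1) * (j + 1)) * (n - j).choose j := by ring
    _ = (n + 1) * (n.choose j * (n - j).choose j) := by rw [h2]; ring

theorem stmt3 (n : ℕ) (hn : 1 ≤ n) (c1 c2 : ℚ) :
    ∑ k ∈ Finset.Icc ((n + 1) / 2) n,
        (1 / ((n : ℚ) + 1)) * ((n + 1).choose k : ℚ) * (k.choose (n - k) : ℚ) *
          c1 ^ (2 * k - n) * c2 ^ (n - k)
      = ∑ k ∈ Finset.range (n / 2 + 1),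
          (n.choose (2 * k) : ℚ) * (((2 * k).choose k : ℚ) / ((k : ℚ) + 1)) *
            c1 ^ (n - 2 * k) * c2 ^ k := by
  refine Finset.sum_bij' (fun k _ => n - k) (fun j _ => n - j) ?_ ?_ ?_ ?_ ?_
  · intro k hk
    simp only [Finset.mem_Icc] at hk
    simp only [Finset.mem_range]
    omega
  · intro j hj
    simp only [Finset.mem_range] at hj
    simp only [Finset.mem_Icc]
    omega
  · intro k hk
    simp only [Finset.mem_Icc] at hk
    omega
  · intro j hj
    simp only [Finset.mem_range] at hj
    omega
  · intro k hk
    simp only [Finset.mem_Icc] at hk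
    have e2 : 2 * (n - k) ≤ n := by omega
    have e3 : n - 2 * (n - k) = 2 * k - n := by omega
    rw [e3]
    have hkey := key_nat n (n - k) e2
    rw [show n - (n - k) = k from by omega] at hkey
    have hq : ((n - k : ℕ) : ℚ) + 1 ≠ 0 := by positivity
    have hn1 : ((n : ℚ) + 1) ≠ 0 := by positivity
    have hc : (1 / ((n : ℚ) + 1)) * ((n + 1).choose k : ℚ) * (k.choose (n - k) : ℚ) =
        (n.choose (2 * (n - k)) : ℚ) *
          (((2 * (n - k)).choose (n - k) : ℚ) / (((n - k : ℕ) : ℚ) + 1)) := by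
      have hQ := congrArg (fun x : ℕ => (x : ℚ)) hkey
      push_cast at hQ
      field_simp
      linarith
    linear_combination (c1 ^ (2 * k - n) * c2 ^ (n - k)) * hc
end

section
/- For n ≥ 1, the Narayana number formula: C(n, k-1)·((k-1)!/n!)·B_{n,k}(1!, 2!, 3!, ...) = (1/n)·C(n, k-1)·C(n, k) for all 1 ≤ k ≤ n. -/
/-- The partial Bell polynomial `B_{n,k}(x_1, …, x_{n-k+1})`. -/
noncomputable def pBell (n k : ℕ) (x : ℕ → ℚ) : ℚ :=
  ∑ α ∈ (Fintype.piFinset (fun _ : Fin (n - k + 1) => Finset.range (n + 1))).filter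
      (fun α => (∑ j, α j) = k ∧ (∑ j, (j.1 + 1) * α j) = n),
    ((n.factorial : ℚ) / ∏ j, ((α j).factorial : ℚ)) *
      ∏ j, (x (j.1 + 1) / ((j.1 + 1).factorial : ℚ)) ^ α j

open Polynomial Finset

lemma aux_hockey (d j : ℕ) :
    ∑ a ∈ Finset.range (d + 1), (a + j).choose j = (d + j + 1).choose (j + 1) := by
  have h := Nat.sum_Icc_choose (d + j) j
  rw [← h, ← Finset.Ico_add_one_right_eq_Icc, Finset.sum_Ico_eq_sum_range]
  have : d + j + 1 - j = d + 1 := by omega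
  rw [this]
  exact Finset.sum_congr rfl fun a _ => by rw [Nat.add_comm a j]

lemma aux_geom_coeff1 (m d : ℕ) (hd : d < m) :
    ((∑ i ∈ Finset.range m, (Polynomial.X : ℚ[X]) ^ i)).coeff d = 1 := by
  rw [Polynomial.finset_sum_coeff]
  simp only [Polynomial.coeff_X_pow]
  rw [Finset.sum_ite_eq (Finset.range m) d (fun _ => (1:ℚ))]
  simp [Finset.mem_range.mpr hd]

lemma aux_geom_coeff (m k : ℕ) (hk : 1 ≤ k) : ∀ d < m,
    ((∑ i ∈ Finset.range m, (Polynomial.X : ℚ[X]) ^ i) ^ k).coeff d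
      = ((d + (k - 1)).choose (k - 1) : ℚ) := by
  induction k, hk using Nat.le_induction with
  | base => intro d hd; simpa using aux_geom_coeff1 m d hd
  | succ k hk ih =>
    intro d hd
    rw [pow_succ, Polynomial.coeff_mul]
    have h1 : ∀ x ∈ Finset.HasAntidiagonal.antidiagonal d,
        ((∑ i ∈ Finset.range m, (Polynomial.X : ℚ[X]) ^ i) ^ k).coeff x.1 *
          (∑ i ∈ Finset.range m, (Polynomial.X : ℚ[X]) ^ i).coeff x.2
        = ((x.1 + (k - 1)).choose (k - 1) : ℚ) := by
      intro x hx
      rw [Finset.HasAntidiagonal.mem_antidiagonal] at hx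
      rw [ih x.1 (by omega), aux_geom_coeff1 m x.2 (by omega), mul_one]
    rw [Finset.sum_congr rfl h1, Finset.Nat.sum_antidiagonal_eq_sum_range_succ_mk]
    have h2 := aux_hockey d (k - 1)
    have h3 : k - 1 + 1 = k := by omega
    rw [h3] at h2
    have h4 : d + (k - 1) + 1 = d + k := by omega
    rw [h4] at h2
    push_cast [← h2]
    rfl

lemma aux_key (n k : ℕ) (hk1 : 1 ≤ k) (hkn : k ≤ n) :
    ∑ α ∈ (Fintype.piFinset (fun _ : Fin (n - k + 1) => Finset.range (n + 1))).filter
        (fun α => (∑ j, α j) = k ∧ (∑ j, (j.1 + 1) * α j) = n),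
      (Nat.multinomial Finset.univ α : ℚ) = ((n - 1).choose (k - 1) : ℚ) := by
  set m := n - k + 1 with hm
  have hA : (Fintype.piFinset (fun _ : Fin m => Finset.range (n + 1))).filter
        (fun α => (∑ j, α j) = k ∧ (∑ j, (j.1 + 1) * α j) = n)
      = (Finset.piAntidiag (Finset.univ : Finset (Fin m)) k).filter
        (fun α => (∑ j, (j.1 + 1) * α j) = n) := by
    ext α
    simp only [Finset.mem_filter, Fintype.mem_piFinset, Finset.mem_range,
      Finset.mem_piAntidiag, Finset.mem_univ, implies_true, and_true]
    constructor
    · rintro ⟨_, h1, h2⟩; exact ⟨h1, h2⟩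
    · rintro ⟨h1, h2⟩
      refine ⟨fun j => ?_, h1, h2⟩
      have h3 := Finset.single_le_sum (f := α) (fun i _ => Nat.zero_le _) (Finset.mem_univ j)
      have h4 : α j ≤ k := le_trans h3 (le_of_eq h1)
      omega
  set P : ℚ[X] := ∑ j : Fin m, Polynomial.X ^ (j.1 + 1) with hP
  have e1 : P = Polynomial.X * ∑ i ∈ Finset.range m, Polynomial.X ^ i := by
    rw [hP, Finset.mul_sum, Fin.sum_univ_eq_sum_range (fun i => (Polynomial.X : ℚ[X]) ^ (i + 1)) m]
    exact Finset.sum_congr rfl fun i _ => (pow_succ' _ _)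
  have e2 : (P ^ k).coeff n = ((n - 1).choose (k - 1) : ℚ) := by
    rw [e1, mul_pow]
    have hn' : n = (n - k) + k := by omega
    rw [hn', Polynomial.coeff_X_pow_mul, aux_geom_coeff m k hk1 (n - k) (by omega)]
    congr 2
    omega
  have e3 : (P ^ k).coeff n
      = ∑ α ∈ (Finset.piAntidiag (Finset.univ : Finset (Fin m)) k).filter
          (fun α => (∑ j, (j.1 + 1) * α j) = n),
        (Nat.multinomial Finset.univ α : ℚ) := by
    rw [hP, Finset.sum_pow_eq_sum_piAntidiag, Polynomial.finset_sum_coeff]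
    have hterm : ∀ α ∈ Finset.piAntidiag (Finset.univ : Finset (Fin m)) k,
        ((Nat.multinomial Finset.univ α : ℚ[X]) *
            ∏ j : Fin m, (Polynomial.X ^ (j.1 + 1)) ^ α j).coeff n
          = if (∑ j, (j.1 + 1) * α j) = n then (Nat.multinomial Finset.univ α : ℚ) else 0 := by
      intro α _
      have : ∏ j : Fin m, ((Polynomial.X : ℚ[X]) ^ (j.1 + 1)) ^ α j
          = Polynomial.X ^ (∑ j, (j.1 + 1) * α j) := by
        rw [← Finset.prod_pow_eq_pow_sum]
        exact Finset.prod_congr rfl fun j _ => (pow_mul _ _ _).symm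
      rw [this, ← Polynomial.C_eq_natCast, Polynomial.coeff_C_mul, Polynomial.coeff_X_pow]
      simp [eq_comm]
    rw [Finset.sum_congr rfl hterm, Finset.sum_filter]
  rw [hA, ← e3, e2]

theorem stmt6 (n k : ℕ) (hn : 1 ≤ n) (hk1 : 1 ≤ k) (hkn : k ≤ n) :
    (n.choose (k - 1) : ℚ) * (((k - 1).factorial : ℚ) / (n.factorial : ℚ)) *
        pBell n k (fun j => (j.factorial : ℚ))
      = (1 / (n : ℚ)) * (n.choose (k - 1) : ℚ) * (n.choose k : ℚ) := by
  have hfk : ((k.factorial : ℚ)) ≠ 0 := Nat.cast_ne_zero.mpr k.factorial_ne_zero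
  have hPB : pBell n k (fun j => (j.factorial : ℚ))
      = ((n.factorial : ℚ) / (k.factorial : ℚ)) * ((n - 1).choose (k - 1) : ℚ) := by
    rw [pBell, ← aux_key n k hk1 hkn, Finset.mul_sum]
    apply Finset.sum_congr rfl
    intro α hα
    rw [Finset.mem_filter] at hα
    obtain ⟨-, h1, -⟩ := hα
    have hprod1 : (∏ j : Fin (n - k + 1),
        ((fun j => (j.factorial : ℚ)) (j.1 + 1) / (((j.1 + 1).factorial : ℚ))) ^ α j) = 1 := by
      apply Finset.prod_eq_one
      intro j _
      rw [div_self (Nat.cast_ne_zero.mpr (j.1 + 1).factorial_ne_zero), one_pow]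
    rw [hprod1, mul_one]
    have hspec := Nat.multinomial_spec Finset.univ α
    rw [h1] at hspec
    have hspecQ : (∏ j, ((α j).factorial : ℚ)) * (Nat.multinomial Finset.univ α : ℚ)
        = (k.factorial : ℚ) := by exact_mod_cast congrArg (Nat.cast : ℕ → ℚ) hspec
    have hprodne : (∏ j, ((α j).factorial : ℚ)) ≠ 0 :=
      Finset.prod_ne_zero_iff.mpr fun j _ => Nat.cast_ne_zero.mpr (α j).factorial_ne_zero
    field_simp
    linear_combination hspecQ.symm
  rw [hPB]
  have hidN : n * ((n - 1).choose (k - 1)) = n.choose k * k := by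
    have h := Nat.add_one_mul_choose_eq (n - 1) (k - 1)
    have e1 : n - 1 + 1 = n := by omega
    have e2 : k - 1 + 1 = k := by omega
    simp only [Nat.succ_eq_add_one, e1, e2] at h
    exact h
  have hid : (n : ℚ) * (((n - 1).choose (k - 1) : ℕ) : ℚ) = ((n.choose k : ℕ) : ℚ) * k := by
    exact_mod_cast congrArg (Nat.cast : ℕ → ℚ) hidN
  have hkf : (k.factorial : ℚ) = (k : ℚ) * (((k - 1).factorial : ℕ) : ℚ) := by
    have : k.factorial = k * (k - 1).factorial := by
      conv_lhs => rw [show k = (k - 1) + 1 by omega]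
      rw [Nat.factorial_succ]
      congr 1
      omega
    exact_mod_cast congrArg (Nat.cast : ℕ → ℚ) this
  have hnne : (n : ℚ) ≠ 0 := Nat.cast_ne_zero.mpr (by omega)
  have hkne : (k : ℚ) ≠ 0 := Nat.cast_ne_zero.mpr (by omega)
  have hnf : ((n.factorial : ℚ)) ≠ 0 := Nat.cast_ne_zero.mpr n.factorial_ne_zero
  have hk1f : (((k - 1).factorial : ℕ) : ℚ) ≠ 0 := Nat.cast_ne_zero.mpr (k - 1).factorial_ne_zero
  rw [hkf]
  field_simp
  ring_nf
  linear_combination (n.choose (k - 1) : ℚ) * hid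
end

section
/- The number of Dyck paths of semilength n (n ≥ 1) with exactly k peaks equals the Narayana number (1/n)·C(n, k-1)·C(n, k). -/
/-- Extend a word `w : Fin m → Bool` to `ℕ` by `false`. (`true` = up-step `u`,
`false` = down-step `d`.) -/
def wext {m : ℕ} (w : Fin m → Bool) (i : ℕ) : Bool :=
  if h : i < m then w ⟨i, h⟩ else false

/-- Number of `true`s (up-steps) among the first `i` letters. -/
def upCount {m : ℕ} (w : Fin m → Bool) (i : ℕ) : ℕ :=
  ((Finset.range i).filter fun t => wext w t = true).card

/-- Number of `false`s (down-steps) among the first `i` letters. -/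
def downCount {m : ℕ} (w : Fin m → Bool) (i : ℕ) : ℕ :=
  ((Finset.range i).filter fun t => wext w t = false).card

/-- `w` is a Dyck word of semilength `n`: `n` up-steps among its `2n` letters and
every prefix has at least as many `u`'s as `d`'s. -/
def IsDyck (n : ℕ) (w : Fin (2 * n) → Bool) : Prop :=
  upCount w (2 * n) = n ∧ ∀ i ≤ 2 * n, downCount w i ≤ upCount w i

/-- Number of peaks (occurrences of the factor `ud`) of a word. -/
def peaks {m : ℕ} (w : Fin m → Bool) : ℕ :=
  ((Finset.range m).filter fun i => wext w i = true ∧ wext w (i + 1) = false).card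

set_option maxHeartbeats 1000000

namespace Nara
open Finset

variable {m : ℕ} {w : Fin m → Bool}

lemma wext_false_of_ge {i : ℕ} (h : m ≤ i) : wext w i = false := by
  simp [wext, Nat.not_lt.2 h]

lemma lt_of_wext_true {i : ℕ} (h : wext w i = true) : i < m := by
  by_contra hc
  rw [wext_false_of_ge (Nat.not_lt.1 hc)] at h
  exact Bool.false_ne_true h

lemma up_add_down (w : Fin m → Bool) (i : ℕ) : upCount w i + downCount w i = i := by
  classical
  have := Finset.card_filter_add_card_filter_not
    (s := Finset.range i) (p := fun t => wext w t = true)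
  simpa [upCount, downCount, Finset.card_range] using this

lemma upCount_split (w : Fin m → Bool) {a b : ℕ} (h : a ≤ b) :
    upCount w b = upCount w a + ((Finset.Ico a b).filter fun t => wext w t = true).card := by
  classical
  unfold upCount
  rw [Finset.range_eq_Ico, ← Finset.Ico_union_Ico_eq_Ico (Nat.zero_le a) h, Finset.filter_union,
    Finset.card_union_of_disjoint, ← Finset.range_eq_Ico]
  exact Finset.disjoint_filter_filter (Finset.Ico_disjoint_Ico_consecutive 0 a b)

lemma downCount_split (w : Fin m → Bool) {a b : ℕ} (h : a ≤ b) :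
    downCount w b = downCount w a + ((Finset.Ico a b).filter fun t => wext w t = false).card := by
  classical
  unfold downCount
  rw [Finset.range_eq_Ico, ← Finset.Ico_union_Ico_eq_Ico (Nat.zero_le a) h, Finset.filter_union,
    Finset.card_union_of_disjoint, ← Finset.range_eq_Ico]
  exact Finset.disjoint_filter_filter (Finset.Ico_disjoint_Ico_consecutive 0 a b)

lemma upCount_mono (w : Fin m → Bool) {a b : ℕ} (h : a ≤ b) : upCount w a ≤ upCount w b := by
  rw [upCount_split w h]; omega

lemma downCount_mono (w : Fin m → Bool) {a b : ℕ} (h : a ≤ b) : downCount w a ≤ downCount w b := by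
  rw [downCount_split w h]; omega

lemma upCount_succ (w : Fin m → Bool) (i : ℕ) :
    upCount w (i + 1) = upCount w i + (if wext w i = true then 1 else 0) := by
  classical
  unfold upCount
  rw [Finset.range_add_one, Finset.filter_insert]
  split <;> simp [Finset.card_insert_of_notMem, *]

lemma downCount_succ (w : Fin m → Bool) (i : ℕ) :
    downCount w (i + 1) = downCount w i + (if wext w i = false then 1 else 0) := by
  classical
  unfold downCount
  rw [Finset.range_add_one, Finset.filter_insert]
  split <;> simp [Finset.card_insert_of_notMem, *]

lemma upCount_congr (w : Fin m → Bool) {a b : ℕ} (h : a ≤ b)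
    (hno : ∀ t, a ≤ t → t < b → wext w t = false) : upCount w b = upCount w a := by
  classical
  rw [upCount_split w h]
  have : ((Finset.Ico a b).filter fun t => wext w t = true) = ∅ := by
    apply Finset.filter_false_of_mem
    intro t ht
    rw [Finset.mem_Ico] at ht
    simp [hno t ht.1 ht.2]
  simp [this]

lemma downCount_congr (w : Fin m → Bool) {a b : ℕ} (h : a ≤ b)
    (hno : ∀ t, a ≤ t → t < b → wext w t = true) : downCount w b = downCount w a := by
  classical
  rw [downCount_split w h]
  have : ((Finset.Ico a b).filter fun t => wext w t = false) = ∅ := by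
    apply Finset.filter_false_of_mem
    intro t ht
    rw [Finset.mem_Ico] at ht
    simp [hno t ht.1 ht.2]
  simp [this]

/-- peak predicate -/
def IsPk {m : ℕ} (w : Fin m → Bool) (t : ℕ) : Prop :=
  wext w t = true ∧ wext w (t + 1) = false

instance {m : ℕ} (w : Fin m → Bool) (t : ℕ) : Decidable (IsPk w t) := by
  unfold IsPk; infer_instance

lemma peaks_eq_card (w : Fin m → Bool) :
    peaks w = ((Finset.range m).filter fun i => IsPk w i).card := rfl

/-- run lemma: from a `u` with no peak in between, everything stays `u`. -/
lemma run_lemma {t s : ℕ} (h0 : wext w t = true) (hts : t ≤ s)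
    (hnp : ∀ r, t ≤ r → r < s → ¬ IsPk w r) : wext w s = true := by
  induction s, hts using Nat.le_induction with
  | base => exact h0
  | succ s hs ih =>
    have hws : wext w s = true := ih (fun r h1 h2 => hnp r h1 (by omega))
    by_contra hc
    exact hnp s hs (by omega) ⟨hws, by simpa using hc⟩

lemma exists_peak_ge {t : ℕ} (ht : wext w t = true) : ∃ q, t ≤ q ∧ IsPk w q := by
  by_contra hc
  push_neg at hc
  have : wext w m = true :=
    run_lemma ht (le_of_lt (lt_of_wext_true ht)) (fun r h1 _ => hc r h1)
  rw [wext_false_of_ge (le_refl m)] at this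
  exact Bool.false_ne_true this


/-! ### Construction of a word from boundary data -/

/-- Boundary data for a Dyck word with `k` peaks of semilength `n`. -/
structure BD (n k : ℕ) (al bl : ℕ → ℕ) : Prop where
  a0 : al 0 = 0
  b0 : bl 0 = 0
  as : ∀ j, j < k → al j < al (j+1)
  bs : ∀ j, j < k → bl j < bl (j+1)
  am : Monotone al
  bm : Monotone bl
  an : ∀ j, al j ≤ n
  bn : ∀ j, bl j ≤ n
  ak : al k = n
  bk : bl k = n
  ba : ∀ j, bl j ≤ al j

section Constr
variable {n k : ℕ} {al bl : ℕ → ℕ}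

/-- the valley boundaries -/
def cB (al bl : ℕ → ℕ) (j : ℕ) : ℕ := al j + bl j
/-- the peak boundaries (one past the peak) -/
def pB (al bl : ℕ → ℕ) (j : ℕ) : ℕ := al (j+1) + bl j

lemma BD.cm (h : BD n k al bl) : Monotone (cB al bl) :=
  fun _ _ hab => Nat.add_le_add (h.am hab) (h.bm hab)

lemma BD.cp (h : BD n k al bl) {j : ℕ} (hj : j < k) : cB al bl j < pB al bl j :=
  Nat.add_lt_add_right (h.as j hj) _

lemma BD.pc (h : BD n k al bl) (j : ℕ) : pB al bl j ≤ cB al bl (j+1) :=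
  Nat.add_le_add_left (h.bm (Nat.le_succ j)) _

lemma BD.c0 (h : BD n k al bl) : cB al bl 0 = 0 := by simp [cB, h.a0, h.b0]

lemma BD.ck (h : BD n k al bl) : cB al bl k = 2 * n := by simp [cB, h.ak, h.bk]; ring

/-- The word built from boundary data. -/
def Wd (n k : ℕ) (al bl : ℕ → ℕ) : Fin (2 * n) → Bool :=
  fun t => decide (∃ j, j < k ∧ cB al bl j ≤ (t : ℕ) ∧ (t : ℕ) < pB al bl j)

lemma wext_Wd (h : BD n k al bl) (t : ℕ) :
    wext (Wd n k al bl) t = true ↔ ∃ j, j < k ∧ cB al bl j ≤ t ∧ t < pB al bl j := by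
  constructor
  · intro ht
    have htm := Nara.lt_of_wext_true ht
    rw [wext, dif_pos htm] at ht
    simpa [Wd] using ht
  · rintro ⟨j, hj, h1, h2⟩
    have : t < 2 * n := by
      have := h.an (j+1); have := h.bn j
      have : pB al bl j ≤ 2 * n := by unfold pB at *; omega
      omega
    rw [wext, dif_pos this]
    simp only [Wd, decide_eq_true_eq]
    exact ⟨j, hj, h1, h2⟩

lemma sum_alpha (h : BD n k al bl) : ∀ l, l ≤ k →
    (∑ j ∈ Finset.range l, (al (j+1) - al j)) = al l := by
  intro l
  induction l with
  | zero => simp [h.a0]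
  | succ l ih =>
    intro hl
    rw [Finset.sum_range_succ, ih (by omega)]
    have := h.as l (by omega)
    omega

lemma upCount_Wd (h : BD n k al bl) (i : ℕ) :
    upCount (Wd n k al bl) i
      = ∑ j ∈ Finset.range k, (min i (pB al bl j) - min i (cB al bl j)) := by
  classical
  have hset : ((Finset.range i).filter fun t => wext (Wd n k al bl) t = true)
      = (Finset.range k).biUnion (fun j => Finset.Ico (cB al bl j) (min i (pB al bl j))) := by
    ext t
    simp only [Finset.mem_filter, Finset.mem_range, Finset.mem_biUnion, Finset.mem_Ico,
      lt_min_iff]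
    rw [wext_Wd h]
    constructor
    · rintro ⟨hti, j, hj, h1, h2⟩; exact ⟨j, hj, h1, hti, h2⟩
    · rintro ⟨j, hj, h1, hti, h2⟩; exact ⟨hti, j, hj, h1, h2⟩
  rw [upCount, hset, Finset.card_biUnion]
  · apply Finset.sum_congr rfl
    intro j hj
    rw [Finset.mem_range] at hj
    rw [Nat.card_Ico]
    have h1 := h.cp hj
    have h2 := h.pc j
    omega
  · intro j1 h1 j2 h2 hne
    rw [Finset.mem_coe, Finset.mem_range] at h1 h2
    wlog hlt : j1 < j2 generalizing j1 j2
    · exact (this h2 h1 hne.symm (by omega)).symm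
    have hsep : pB al bl j1 ≤ cB al bl j2 := le_trans (h.pc j1) (h.cm hlt)
    apply Finset.disjoint_left.2
    intro t ht1 ht2
    rw [Finset.mem_Ico] at ht1 ht2
    omega

/-- Evaluation of `upCount` inside block `j'`. -/
lemma upCount_Wd_eval (h : BD n k al bl) {j' i : ℕ} (hj' : j' < k)
    (h1 : cB al bl j' ≤ i) (h2 : i ≤ cB al bl (j'+1)) :
    upCount (Wd n k al bl) i = al j' + (min i (pB al bl j') - cB al bl j') := by
  rw [upCount_Wd h]
  rw [Finset.range_eq_Ico, ← Finset.sum_Ico_consecutive _ (Nat.zero_le (j'+1)) (by omega : j'+1 ≤ k),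
    ← Finset.range_eq_Ico, Finset.sum_range_succ]
  have hrest : (∑ j ∈ Finset.Ico (j'+1) k, (min i (pB al bl j) - min i (cB al bl j))) = 0 := by
    apply Finset.sum_eq_zero
    intro j hj
    rw [Finset.mem_Ico] at hj
    have hc : i ≤ cB al bl j := le_trans h2 (h.cm hj.1)
    have hp : cB al bl j ≤ pB al bl j := le_of_lt (h.cp hj.2)
    omega
  have hfirst : (∑ j ∈ Finset.range j', (min i (pB al bl j) - min i (cB al bl j)))
      = al j' := by
    rw [← sum_alpha h j' (by omega)]
    apply Finset.sum_congr rfl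
    intro j hj
    rw [Finset.mem_range] at hj
    have hple : pB al bl j ≤ i := le_trans (le_trans (h.pc j) (h.cm (by omega))) h1
    have hcle : cB al bl j ≤ i := le_trans (le_of_lt (h.cp (by omega))) hple
    rw [min_eq_right hple, min_eq_right hcle]
    unfold pB cB
    have := h.bm (Nat.le_succ j)
    omega
  rw [hrest, hfirst]
  have := h.cp hj'
  have := min_le_left i (pB al bl j')
  omega

lemma Wd_isDyck (h : BD n k al bl) (hk : 0 < k) : IsDyck n (Wd n k al bl) := by
  constructor
  · have := upCount_Wd_eval h (j' := k - 1) (i := 2 * n) (by omega)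
      (by rw [← h.ck]; exact h.cm (by omega))
      (by have : k - 1 + 1 = k := by omega
          rw [this, h.ck])
    rw [this]
    have hkk : k - 1 + 1 = k := by omega
    have hp2n : pB al bl (k-1) ≤ 2 * n := by
      have := h.an (k-1+1); have := h.bn (k-1); unfold pB; omega
    rw [min_eq_right hp2n]
    have hcp := h.cp (j := k-1) (by omega)
    have hpc := h.pc (k-1)
    have hck := h.ck
    unfold pB cB at *
    rw [hkk] at *
    have := h.ak
    omega
  · intro i hi
    -- find the block containing i
    have hP0 : cB al bl 0 ≤ i := by rw [h.c0]; omega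
    set j' := Nat.findGreatest (fun j => cB al bl j ≤ i) (k-1) with hj'def
    have hj'le : j' ≤ k - 1 := Nat.findGreatest_le _
    have hj'spec : cB al bl j' ≤ i :=
      Nat.findGreatest_spec (P := fun j => cB al bl j ≤ i) (Nat.zero_le _) hP0
    have hnext : i ≤ cB al bl (j'+1) := by
      rcases Nat.lt_or_ge j' (k-1) with hlt | hge
      · have hngt : ¬ (cB al bl (j'+1) ≤ i) :=
          Nat.findGreatest_is_greatest (P := fun j => cB al bl j ≤ i) (n := k-1)
            (by omega) (by omega)
        omega
      · have hj'eq : j' = k - 1 := by omega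
        have : cB al bl (j'+1) = 2 * n := by rw [hj'eq, (by omega : k - 1 + 1 = k), h.ck]
        omega
    have hval := upCount_Wd_eval h (j' := j') (i := i) (by omega) hj'spec hnext
    have hsum := up_add_down (Wd n k al bl) i
    have hba1 := h.ba j'
    have hba2 := h.ba (j'+1)
    rcases Nat.le_total i (pB al bl j') with hcase | hcase
    · rw [min_eq_left hcase] at hval
      unfold cB at *
      omega
    · rw [min_eq_right hcase] at hval
      have := h.cp (j := j') (by omega)
      unfold cB pB at *
      omega


lemma isPk_Wd_iff (h : BD n k al bl) (t : ℕ) :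
    IsPk (Wd n k al bl) t ↔ ∃ j, j < k ∧ t + 1 = pB al bl j := by
  constructor
  · rintro ⟨hu, hd⟩
    obtain ⟨j, hj, h1, h2⟩ := (wext_Wd h t).1 hu
    refine ⟨j, hj, ?_⟩
    by_contra hne
    have hpred : wext (Wd n k al bl) (t+1) = true :=
      (wext_Wd h (t+1)).2 ⟨j, hj, by omega, by omega⟩
    rw [hd] at hpred
    exact Bool.false_ne_true hpred
  · rintro ⟨j, hj, hpb⟩
    have hcp := h.cp hj
    constructor
    · exact (wext_Wd h t).2 ⟨j, hj, by omega, by omega⟩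
    · by_contra hne
      have : wext (Wd n k al bl) (t+1) = true := by
        cases hb : wext (Wd n k al bl) (t+1)
        · exact absurd hb hne
        · rfl
      obtain ⟨j2, hj2, g1, g2⟩ := (wext_Wd h (t+1)).1 this
      -- t + 1 = pB j ; block j2 contains pB j
      rcases Nat.lt_trichotomy j2 j with hlt | heq | hgt
      · have : pB al bl j2 ≤ cB al bl j := le_trans (h.pc j2) (h.cm hlt)
        have hcpj : cB al bl j < pB al bl j := hcp
        omega
      · subst heq; omega
      · -- j < j2 : cB j2 ≥ al (j+1) + bl (j+1) > pB j
        have h1' : al (j+1) ≤ al j2 := h.am hgt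
        have h2' : bl (j+1) ≤ bl j2 := h.bm hgt
        have h3' : bl j < bl (j+1) := h.bs j hj
        unfold cB pB at *
        omega

lemma peaks_Wd (h : BD n k al bl) : peaks (Wd n k al bl) = k := by
  classical
  rw [peaks_eq_card]
  have himg : ((Finset.range (2*n)).filter fun i => IsPk (Wd n k al bl) i)
      = (Finset.range k).image (fun j => pB al bl j - 1) := by
    ext t
    simp only [Finset.mem_filter, Finset.mem_range, Finset.mem_image]
    constructor
    · rintro ⟨htn, hpk⟩
      obtain ⟨j, hj, hpb⟩ := (isPk_Wd_iff h t).1 hpk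
      exact ⟨j, hj, by omega⟩
    · rintro ⟨j, hj, hpb⟩
      have hcp := h.cp hj
      have hc0 : cB al bl 0 ≤ cB al bl j := h.cm (Nat.zero_le j)
      rw [h.c0] at hc0
      have hpk : IsPk (Wd n k al bl) t := (isPk_Wd_iff h t).2 ⟨j, hj, by omega⟩
      have : t < 2 * n := lt_of_wext_true hpk.1
      exact ⟨this, hpk⟩
  rw [himg, Finset.card_image_of_injOn, Finset.card_range]
  intro j1 h1 j2 h2 heq
  simp only [Finset.coe_range, Set.mem_Iio] at h1 h2
  simp only at heq
  rcases Nat.lt_trichotomy j1 j2 with hlt | he | hgt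
  · have hs : pB al bl j1 ≤ cB al bl j2 := le_trans (h.pc j1) (h.cm hlt)
    have hc1 := h.cp h1
    have hc2 := h.cp h2
    omega
  · exact he
  · have hs : pB al bl j2 ≤ cB al bl j1 := le_trans (h.pc j2) (h.cm hgt)
    have hc1 := h.cp h1
    have hc2 := h.cp h2
    omega

lemma upCount_Wd_pB (h : BD n k al bl) {j : ℕ} (hj : j < k) :
    upCount (Wd n k al bl) (pB al bl j) = al (j+1) := by
  have := upCount_Wd_eval h hj (le_of_lt (h.cp hj)) (h.pc j)
  rw [this, min_self]
  have hcp := h.cp hj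
  unfold cB pB at *
  omega

lemma downCount_Wd_pB (h : BD n k al bl) {j : ℕ} (hj : j < k) :
    downCount (Wd n k al bl) (pB al bl j) = bl j := by
  have h1 := upCount_Wd_pB h hj
  have h2 := up_add_down (Wd n k al bl) (pB al bl j)
  unfold pB at *
  omega

lemma downCount_Wd_pB_pred (h : BD n k al bl) {j : ℕ} (hj : j < k) :
    downCount (Wd n k al bl) (pB al bl j - 1) = bl j := by
  have hcp := h.cp hj
  have heval := upCount_Wd_eval h hj (by omega) (le_trans (by omega : pB al bl j - 1 ≤ pB al bl j) (h.pc j))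
  rw [min_eq_left (by omega)] at heval
  have h2 := up_add_down (Wd n k al bl) (pB al bl j - 1)
  unfold pB cB at *
  omega

end Constr

/-! ### Extraction of boundary data from a Dyck word -/

section Extract
open Finset

variable {n : ℕ} {w : Fin (2*n) → Bool} {K : ℕ}

def pkF (w : Fin (2*n) → Bool) : Finset ℕ :=
  (Finset.range (2*n)).filter fun i => wext w i = true ∧ wext w (i + 1) = false

lemma pkF_card (w : Fin (2*n) → Bool) : (pkF w).card = peaks w := rfl

lemma mem_pkF {t : ℕ} : t ∈ pkF w ↔ t < 2*n ∧ IsPk w t := by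
  simp [pkF, IsPk, Finset.mem_filter, Finset.mem_range]

/-- the `j`-th peak position -/
noncomputable def qE (hq : (pkF w).card = K + 1) : Fin (K+1) → ℕ :=
  fun j => (pkF w).orderEmbOfFin hq j

lemma qE_mono (hq : (pkF w).card = K + 1) : StrictMono (qE hq) :=
  ((pkF w).orderEmbOfFin hq).strictMono

lemma qE_pk (hq : (pkF w).card = K + 1) (j : Fin (K+1)) : IsPk w (qE hq j) :=
  (mem_pkF.1 (Finset.orderEmbOfFin_mem _ hq j)).2

lemma qE_lt (hq : (pkF w).card = K + 1) (j : Fin (K+1)) : qE hq j < 2*n :=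
  (mem_pkF.1 (Finset.orderEmbOfFin_mem _ hq j)).1

lemma qE_surj (hq : (pkF w).card = K + 1) {t : ℕ} (ht : IsPk w t) : ∃ j, qE hq j = t := by
  have htm : t ∈ pkF w := mem_pkF.2 ⟨lt_of_wext_true ht.1, ht⟩
  have := Finset.range_orderEmbOfFin (pkF w) hq
  rw [← Finset.mem_coe, ← this] at htm
  exact htm

lemma upCount_zero' : upCount w 0 = 0 := by simp [upCount]
lemma downCount_zero' : downCount w 0 = 0 := by simp [downCount]

lemma w0_true (hw : IsDyck n w) (hn : 1 ≤ n) : wext w 0 = true := by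
  by_contra hc
  have hb : wext w 0 = false := by
    cases h : wext w 0
    · rfl
    · exact absurd h hc
  have h1 := hw.2 1 (by omega)
  have hs := upCount_succ w 0
  have hd := downCount_succ w 0
  rw [hb] at hs hd
  simp [upCount_zero', downCount_zero'] at hs hd
  omega

lemma upCount_le_n (hw : IsDyck n w) (i : ℕ) : upCount w i ≤ n := by
  have hw1 := hw.1
  rcases Nat.le_total i (2*n) with hc | hc
  · have := upCount_mono w hc; omega
  · have := upCount_congr w hc (fun t h1 _ => wext_false_of_ge h1)
    omega

lemma no_u_after (hq : (pkF w).card = K + 1) {t : ℕ}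
    (ht : qE hq (Fin.last K) < t) : wext w t = false := by
  by_contra hc
  simp only [Bool.not_eq_false] at hc
  have hu : wext w t = true := hc
  obtain ⟨q', hq', hpk'⟩ := exists_peak_ge hu
  obtain ⟨j, hj⟩ := qE_surj hq hpk'
  have : qE hq j ≤ qE hq (Fin.last K) := (qE_mono hq).monotone (Fin.le_last j)
  omega

lemma upto_first (hw : IsDyck n w) (hn : 1 ≤ n) (hq : (pkF w).card = K + 1) {t : ℕ}
    (ht : t ≤ qE hq 0) : wext w t = true := by
  apply run_lemma (w0_true hw hn) (Nat.zero_le t)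
  intro r _ hr hpk
  obtain ⟨j, hj⟩ := qE_surj hq hpk
  have : qE hq 0 ≤ qE hq j := (qE_mono hq).monotone (Fin.zero_le j)
  omega

lemma vE_ex (hq : (pkF w).card = K + 1) (j : Fin K) :
    ∃ t, qE hq j.castSucc < t ∧ wext w t = true :=
  ⟨qE hq j.succ, qE_mono hq (Fin.castSucc_lt_succ (i := j)), (qE_pk hq j.succ).1⟩

/-- start of the `(j+1)`-st ascent run -/
noncomputable def vE (hq : (pkF w).card = K + 1) (j : Fin K) : ℕ :=
  Nat.find (vE_ex hq j)

lemma vE_gt (hq : (pkF w).card = K + 1) (j : Fin K) : qE hq j.castSucc < vE hq j :=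
  (Nat.find_spec (vE_ex hq j)).1

lemma vE_true (hq : (pkF w).card = K + 1) (j : Fin K) : wext w (vE hq j) = true :=
  (Nat.find_spec (vE_ex hq j)).2

lemma vE_le (hq : (pkF w).card = K + 1) (j : Fin K) : vE hq j ≤ qE hq j.succ :=
  Nat.find_min' _ ⟨qE_mono hq (Fin.castSucc_lt_succ (i := j)), (qE_pk hq j.succ).1⟩

lemma vE_min (hq : (pkF w).card = K + 1) (j : Fin K) {t : ℕ}
    (h1 : qE hq j.castSucc < t) (h2 : wext w t = true) : vE hq j ≤ t :=
  Nat.find_min' _ ⟨h1, h2⟩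

lemma no_u_between (hq : (pkF w).card = K + 1) (j : Fin K) {t : ℕ}
    (h1 : qE hq j.castSucc < t) (h2 : t < vE hq j) : wext w t = false := by
  have := Nat.find_min (vE_ex hq j) h2
  push_neg at this
  cases hb : wext w t
  · rfl
  · exact absurd hb (this h1)

lemma all_u (hq : (pkF w).card = K + 1) (j : Fin K) {t : ℕ}
    (h1 : vE hq j ≤ t) (h2 : t ≤ qE hq j.succ) : wext w t = true := by
  apply run_lemma (vE_true hq j) h1
  intro r hr1 hr2 hpk
  obtain ⟨j2, hj2⟩ := qE_surj hq hpk
  have hgt : qE hq j.castSucc < qE hq j2 := by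
    have := vE_gt hq j; omega
  have hj2gt : j.castSucc < j2 := by
    by_contra hc
    exact absurd ((qE_mono hq).monotone (not_lt.1 hc)) (not_le.2 hgt)
  have : j.succ ≤ j2 := Fin.castSucc_lt_iff_succ_le.1 hj2gt
  have : qE hq j.succ ≤ qE hq j2 := (qE_mono hq).monotone this
  omega

/-- extracted ascent data -/
noncomputable def SE (hq : (pkF w).card = K + 1) : Fin K → ℕ :=
  fun j => upCount w (qE hq j.castSucc + 1)

/-- extracted descent data -/
noncomputable def TE (hq : (pkF w).card = K + 1) : Fin K → ℕ :=
  fun j => downCount w (qE hq j.succ)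

lemma SE_eq_v (hq : (pkF w).card = K + 1) (j : Fin K) :
    SE hq j = upCount w (vE hq j) := by
  unfold SE
  rw [upCount_congr w (by have := vE_gt hq j; omega : qE hq j.castSucc + 1 ≤ vE hq j)]
  intro t h1 h2
  exact no_u_between hq j (by omega) h2

lemma TE_eq_v (hq : (pkF w).card = K + 1) (j : Fin K) :
    TE hq j = downCount w (vE hq j) := by
  unfold TE
  rw [downCount_congr w (vE_le hq j)]
  intro t h1 h2
  exact all_u hq j h1 (by omega)

lemma v_sum (hq : (pkF w).card = K + 1) (j : Fin K) :
    vE hq j = SE hq j + TE hq j := by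
  rw [SE_eq_v hq j, TE_eq_v hq j, up_add_down]

lemma TE_le_SE (hw : IsDyck n w) (hq : (pkF w).card = K + 1) (j : Fin K) :
    TE hq j ≤ SE hq j := by
  rw [SE_eq_v hq j, TE_eq_v hq j]
  exact hw.2 _ (by have := vE_le hq j; have := qE_lt hq j.succ; omega)

lemma TE_pos (hq : (pkF w).card = K + 1) (j : Fin K) : 1 ≤ TE hq j := by
  have hfalse : wext w (qE hq j.castSucc + 1) = false := (qE_pk hq j.castSucc).2
  have hlt : qE hq j.castSucc + 1 < vE hq j := by
    have h1 := vE_gt hq j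
    have h2 := vE_true hq j
    rcases Nat.lt_or_ge (qE hq j.castSucc + 1) (vE hq j) with hc | hc
    · exact hc
    · exfalso
      have heq : qE hq j.castSucc + 1 = vE hq j := by omega
      rw [heq, h2] at hfalse
      simp at hfalse
  rw [TE_eq_v hq j]
  calc 1 ≤ downCount w (qE hq j.castSucc + 1 + 1) := by
        rw [downCount_succ, hfalse]; simp
    _ ≤ downCount w (vE hq j) := downCount_mono w (by omega)

lemma SE_mono (hq : (pkF w).card = K + 1) : StrictMono (SE hq) := by
  intro j1 j2 hlt
  unfold SE
  have hq12 : qE hq j1.castSucc + 1 ≤ qE hq j2.castSucc :=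
    qE_mono hq (by simpa using hlt)
  calc upCount w (qE hq j1.castSucc + 1)
      < upCount w (qE hq j2.castSucc) + 1 := by
        have := upCount_mono w hq12; omega
    _ = upCount w (qE hq j2.castSucc + 1) := by
        rw [upCount_succ, (qE_pk hq j2.castSucc).1]; simp

lemma TE_mono (hq : (pkF w).card = K + 1) : StrictMono (TE hq) := by
  intro j1 j2 hlt
  unfold TE
  have hfalse : wext w (qE hq j1.succ + 1) = false := (qE_pk hq j1.succ).2
  have hne : qE hq j1.succ + 1 ≠ qE hq j2.succ := by
    intro hcon
    have := (qE_pk hq j2.succ).1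
    rw [← hcon, hfalse] at this
    exact Bool.false_ne_true this
  have h12 : qE hq j1.succ + 2 ≤ qE hq j2.succ := by
    have : qE hq j1.succ < qE hq j2.succ := qE_mono hq (by simpa using hlt)
    omega
  calc downCount w (qE hq j1.succ)
      < downCount w (qE hq j1.succ + 1 + 1) := by
        rw [downCount_succ _ (qE hq j1.succ + 1), hfalse, if_pos rfl]
        have := downCount_mono w (by omega : qE hq j1.succ ≤ qE hq j1.succ + 1)
        omega
    _ ≤ downCount w (qE hq j2.succ) := downCount_mono w (by omega)

lemma upCount_qtop (hw : IsDyck n w) (hq : (pkF w).card = K + 1) :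
    upCount w (qE hq (Fin.last K) + 1) = n := by
  have hlt := qE_lt hq (Fin.last K)
  have hcg := upCount_congr w (by omega : qE hq (Fin.last K) + 1 ≤ 2*n)
    (fun t h1 _ => no_u_after hq (by omega))
  have hw1 := hw.1
  omega

lemma SE_le (hw : IsDyck n w) (hq : (pkF w).card = K + 1) (j : Fin K) :
    SE hq j ≤ n - 1 := by
  have h1 : qE hq j.castSucc + 1 ≤ qE hq (Fin.last K) := by
    have : j.castSucc < Fin.last K := lt_of_lt_of_le (Fin.castSucc_lt_succ (i := j)) (Fin.le_last j.succ)
    have := qE_mono hq this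
    omega
  have h2 : SE hq j + 1 ≤ upCount w (qE hq (Fin.last K) + 1) := by
    unfold SE
    rw [upCount_succ w (qE hq (Fin.last K)), (qE_pk hq (Fin.last K)).1, if_pos rfl]
    have := upCount_mono w h1
    omega
  rw [upCount_qtop hw hq] at h2
  omega

lemma downCount_first (hw : IsDyck n w) (hn : 1 ≤ n) (hq : (pkF w).card = K + 1) :
    downCount w (qE hq 0 + 1) = 0 := by
  rw [downCount_congr w (Nat.zero_le _), downCount_zero']
  intro t _ h2
  exact upto_first hw hn hq (by omega)

lemma w_char (hw : IsDyck n w) (hn : 1 ≤ n) (hq : (pkF w).card = K + 1) (t : ℕ) :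
    wext w t = true ↔
      (t ≤ qE hq 0 ∨ ∃ j : Fin K, vE hq j ≤ t ∧ t ≤ qE hq j.succ) := by
  constructor
  · intro hu
    have htlast : t ≤ qE hq (Fin.last K) := by
      by_contra hc
      rw [no_u_after hq (by omega)] at hu
      exact Bool.false_ne_true hu
    set J := (Finset.univ : Finset (Fin (K+1))).filter (fun j => t ≤ qE hq j) with hJ
    have hJne : J.Nonempty := ⟨Fin.last K, by simp [hJ, htlast]⟩
    set j0 := J.min' hJne with hj0
    have hj0mem : t ≤ qE hq j0 := by
      have := J.min'_mem hJne
      simp [hJ] at this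
      exact this
    rcases Fin.eq_zero_or_eq_succ j0 with h0 | ⟨i, hi⟩
    · left; rw [h0] at hj0mem; exact hj0mem
    · right
      refine ⟨i, ?_, by rw [← hi]; exact hj0mem⟩
      apply vE_min hq i _ hu
      by_contra hc
      have hmem : i.castSucc ∈ J := by simp [hJ]; omega
      have := J.min'_le i.castSucc hmem
      rw [← hj0, hi] at this
      exact absurd (lt_of_le_of_lt this (Fin.castSucc_lt_succ (i := i))) (lt_irrefl _)
  · rintro (h0 | ⟨j, h1, h2⟩)
    · exact upto_first hw hn hq h0
    · exact all_u hq j h1 h2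

end Extract

/-! ### The pair type -/

def GP (n K : ℕ) : Type :=
  {p : (Fin K → ℕ) × (Fin K → ℕ) //
    StrictMono p.1 ∧ StrictMono p.2 ∧ (∀ j, 1 ≤ p.2 j) ∧ (∀ j, p.1 j ≤ n - 1) ∧
      ∀ j, p.2 j ≤ p.1 j}

def alP (n : ℕ) {K : ℕ} (f : Fin K → ℕ) : ℕ → ℕ :=
  fun j => if j = 0 then 0 else if h : j - 1 < K then f ⟨j-1, h⟩ else n

section Transfer
variable {n K : ℕ} {f : Fin K → ℕ}

lemma alP_zero : alP n f 0 = 0 := rfl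

lemma alP_val (j : Fin K) : alP n f ((j : ℕ)+1) = f j := by
  simp only [alP, Nat.add_sub_cancel, Nat.succ_ne_zero, if_false, dif_pos j.isLt]

lemma alP_top {j : ℕ} (hj : K + 1 ≤ j) : alP n f j = n := by
  have h1 : j ≠ 0 := by omega
  have h2 : ¬ (j - 1 < K) := by omega
  simp only [alP, h1, if_false, dif_neg h2]

lemma alP_lt (hn : 1 ≤ n) (hmono : StrictMono f) (h1 : ∀ j, 1 ≤ f j)
    (hn' : ∀ j, f j ≤ n - 1) : ∀ j, j < K + 1 → alP n f j < alP n f (j+1) := by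
  intro j hj
  rcases Nat.eq_zero_or_pos j with h0 | hpos
  · subst h0
    rw [alP_zero]
    rcases Nat.eq_zero_or_pos K with hK | hK
    · rw [alP_top (by omega)]; omega
    · have : alP n f 1 = f ⟨0, hK⟩ := by
        have := alP_val (n := n) (f := f) ⟨0, hK⟩
        simpa using this
      rw [this]
      exact lt_of_lt_of_le Nat.zero_lt_one (h1 _)
  · obtain ⟨i, rfl⟩ : ∃ i, j = i + 1 := ⟨j - 1, by omega⟩
    have hiK : i < K := by omega
    rw [alP_val ⟨i, hiK⟩]
    rcases Nat.lt_or_ge (i+1) K with hc | hc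
    · rw [alP_val ⟨i+1, hc⟩]
      exact hmono (by simp [Fin.lt_def])
    · rw [alP_top (by omega)]
      have := hn' ⟨i, hiK⟩
      omega

lemma alP_le_n (hn' : ∀ j, f j ≤ n - 1) : ∀ j, alP n f j ≤ n := by
  intro j
  rcases Nat.eq_zero_or_pos j with h0 | hpos
  · subst h0; rw [alP_zero]; omega
  · rcases Nat.lt_or_ge (j-1) K with hc | hc
    · have : alP n f j = f ⟨j-1, hc⟩ := by
        have := alP_val (n := n) (f := f) ⟨j-1, hc⟩
        simp only at this
        rw [← this]
        congr 1
        omega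
      rw [this]
      have := hn' ⟨j-1, hc⟩
      omega
    · rw [alP_top (by omega)]

lemma alP_mono (hn : 1 ≤ n) (hmono : StrictMono f) (h1 : ∀ j, 1 ≤ f j)
    (hn' : ∀ j, f j ≤ n - 1) : Monotone (alP n f) := by
  apply monotone_nat_of_le_succ
  intro j
  rcases Nat.lt_or_ge j (K+1) with hc | hc
  · exact le_of_lt (alP_lt hn hmono h1 hn' j hc)
  · rw [alP_top (by omega), alP_top (by omega)]

lemma GP_BD (hn : 1 ≤ n) (p : GP n K) :
    BD n (K+1) (alP n p.1.1) (alP n p.1.2) := by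
  obtain ⟨hS, hT, hT1, hSn, hTS⟩ := p.2
  have hS1 : ∀ j, 1 ≤ p.1.1 j := fun j => le_trans (hT1 j) (hTS j)
  have hTn : ∀ j, p.1.2 j ≤ n - 1 := fun j => le_trans (hTS j) (hSn j)
  refine ⟨alP_zero, alP_zero, alP_lt hn hS hS1 hSn, alP_lt hn hT hT1 hTn,
    alP_mono hn hS hS1 hSn, alP_mono hn hT hT1 hTn,
    alP_le_n hSn, alP_le_n hTn, alP_top (le_refl _), alP_top (le_refl _), ?_⟩
  intro j
  rcases Nat.eq_zero_or_pos j with h0 | hpos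
  · subst h0; rw [alP_zero, alP_zero]
  · rcases Nat.lt_or_ge (j-1) K with hc | hc
    · obtain ⟨i, rfl⟩ : ∃ i, j = i + 1 := ⟨j - 1, by omega⟩
      simp only [Nat.add_sub_cancel] at hc
      rw [alP_val ⟨i, hc⟩, alP_val ⟨i, hc⟩]
      exact hTS _
    · rw [alP_top (by omega), alP_top (by omega)]

end Transfer

/-! ### The equivalence -/

section RT
open Finset
variable {n K : ℕ}

/-- word associated to a pair -/
def toW (n : ℕ) {K : ℕ} (p : GP n K) : Fin (2*n) → Bool :=
  Wd n (K+1) (alP n p.1.1) (alP n p.1.2)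

lemma toW_dyck (hn : 1 ≤ n) (p : GP n K) : IsDyck n (toW n p) :=
  Wd_isDyck (GP_BD hn p) (by omega)

lemma toW_peaks (hn : 1 ≤ n) (p : GP n K) : peaks (toW n p) = K + 1 :=
  peaks_Wd (GP_BD hn p)

lemma toW_pkF_card (hn : 1 ≤ n) (p : GP n K) : (pkF (toW n p)).card = K + 1 := by
  rw [pkF_card, toW_peaks hn p]

lemma qE_toW (hn : 1 ≤ n) (p : GP n K) (j : Fin (K+1)) :
    qE (toW_pkF_card hn p) j = pB (alP n p.1.1) (alP n p.1.2) (j : ℕ) - 1 := by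
  set al := alP n p.1.1 with hal
  set bl := alP n p.1.2 with hbl
  have h : BD n (K+1) al bl := GP_BD hn p
  have hg : ∀ i : Fin (K+1), (fun i : Fin (K+1) => pB al bl (i:ℕ) - 1) i ∈ pkF (toW n p) := by
    intro i
    have hcp := h.cp i.isLt
    have hpk : IsPk (toW n p) (pB al bl (i:ℕ) - 1) :=
      (isPk_Wd_iff h _).2 ⟨(i:ℕ), i.isLt, by omega⟩
    exact mem_pkF.2 ⟨lt_of_wext_true hpk.1, hpk⟩
  have hmono : StrictMono (fun i : Fin (K+1) => pB al bl (i:ℕ) - 1) := by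
    intro i1 i2 hlt
    have hs : pB al bl (i1:ℕ) ≤ cB al bl (i2:ℕ) := le_trans (h.pc _) (h.cm (by exact hlt))
    have hc1 := h.cp i1.isLt
    have hc2 := h.cp i2.isLt
    simp only
    omega
  have := Finset.orderEmbOfFin_unique (toW_pkF_card hn p) hg hmono
  unfold qE
  rw [← this]

lemma SE_toW (hn : 1 ≤ n) (p : GP n K) (j : Fin K) :
    SE (toW_pkF_card hn p) j = p.1.1 j := by
  have h := GP_BD hn p
  unfold SE
  rw [qE_toW hn p j.castSucc]
  have hcp := h.cp (j := (j : ℕ)) (by omega)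
  have hcast : (j.castSucc : ℕ) = (j : ℕ) := rfl
  rw [hcast, (by omega : pB (alP n p.1.1) (alP n p.1.2) (j:ℕ) - 1 + 1
      = pB (alP n p.1.1) (alP n p.1.2) (j:ℕ))]
  rw [show toW n p = Wd n (K+1) (alP n p.1.1) (alP n p.1.2) from rfl]
  rw [upCount_Wd_pB h (by omega : (j:ℕ) < K+1)]
  exact alP_val j

lemma TE_toW (hn : 1 ≤ n) (p : GP n K) (j : Fin K) :
    TE (toW_pkF_card hn p) j = p.1.2 j := by
  have h := GP_BD hn p
  unfold TE
  rw [qE_toW hn p j.succ]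
  have hsucc : (j.succ : ℕ) = (j : ℕ) + 1 := rfl
  rw [hsucc]
  rw [show toW n p = Wd n (K+1) (alP n p.1.1) (alP n p.1.2) from rfl]
  rw [downCount_Wd_pB_pred h (by omega : (j:ℕ)+1 < K+1)]
  exact alP_val j


variable {w : Fin (2*n) → Bool}

/-- the pair extracted from a Dyck word -/
noncomputable def pE (hw : IsDyck n w) (hq : (pkF w).card = K + 1) : GP n K :=
  ⟨(SE hq, TE hq), SE_mono hq, TE_mono hq, fun j => TE_pos hq j,
    fun j => SE_le hw hq j, fun j => TE_le_SE hw hq j⟩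

lemma pB_zero (hw : IsDyck n w) (hn : 1 ≤ n) (hq : (pkF w).card = K + 1) :
    pB (alP n (SE hq)) (alP n (TE hq)) 0 = qE hq 0 + 1 := by
  have hsum := up_add_down w (qE hq 0 + 1)
  have hdf := downCount_first hw hn hq
  have hpb : pB (alP n (SE hq)) (alP n (TE hq)) 0 = alP n (SE hq) 1 := by
    unfold pB
    rw [alP_zero]
    simp
  rw [hpb]
  rcases Nat.eq_zero_or_pos K with hK | hK
  · subst hK
    rw [alP_top (by omega)]
    have h0l : (0 : Fin 1) = Fin.last 0 := rfl
    have := upCount_qtop hw hq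
    rw [← h0l] at this
    omega
  · have hv : alP n (SE hq) 1 = SE hq ⟨0, hK⟩ := by
      have := alP_val (n := n) (f := SE hq) ⟨0, hK⟩
      simpa using this
    rw [hv]
    have hcs : (⟨0, hK⟩ : Fin K).castSucc = (0 : Fin (K+1)) := rfl
    unfold SE
    rw [hcs]
    omega

lemma cB_succ (hq : (pkF w).card = K + 1) (j : Fin K) :
    cB (alP n (SE hq)) (alP n (TE hq)) ((j : ℕ)+1) = vE hq j := by
  unfold cB
  rw [alP_val j, alP_val j, ← v_sum hq j]

lemma pB_succ (hw : IsDyck n w) (hq : (pkF w).card = K + 1) (j : Fin K) :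
    pB (alP n (SE hq)) (alP n (TE hq)) ((j : ℕ)+1) = qE hq j.succ + 1 := by
  have hsum := up_add_down w (qE hq j.succ + 1)
  have hdc : downCount w (qE hq j.succ + 1) = TE hq j := by
    unfold TE
    rw [downCount_succ, (qE_pk hq j.succ).1]
    simp
  have hup : alP n (SE hq) ((j:ℕ)+2) = upCount w (qE hq j.succ + 1) := by
    rcases Nat.lt_or_ge ((j:ℕ)+1) K with hc | hc
    · have hval := alP_val (n := n) (f := SE hq) ⟨(j:ℕ)+1, hc⟩
      simp only at hval
      rw [hval]
      unfold SE
      have hcs : (⟨(j:ℕ)+1, hc⟩ : Fin K).castSucc = j.succ := Fin.ext rfl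
      rw [hcs]
    · rw [alP_top (by omega)]
      have hlast : j.succ = Fin.last K := by
        apply Fin.ext
        simp [Fin.val_last]
        omega
      rw [hlast]
      exact (upCount_qtop hw hq).symm
  unfold pB
  rw [(by omega : (j:ℕ)+1+1 = (j:ℕ)+2), hup, alP_val j]
  omega

lemma toW_pE (hw : IsDyck n w) (hn : 1 ≤ n) (hq : (pkF w).card = K + 1) :
    toW n (pE hw hq) = w := by
  have h' : BD n (K+1) (alP n (SE hq)) (alP n (TE hq)) := GP_BD hn (pE hw hq)
  funext x
  have hwx : wext w (x:ℕ) = w x := by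
    rw [wext, dif_pos x.isLt]
  have hWx : wext (toW n (pE hw hq)) (x:ℕ) = toW n (pE hw hq) x := by
    rw [wext, dif_pos x.isLt]
  rw [← hwx, ← hWx]
  have hiff : (wext (toW n (pE hw hq)) (x:ℕ) = true) ↔ (wext w (x:ℕ) = true) := by
    rw [show toW n (pE hw hq) = Wd n (K+1) (alP n (SE hq)) (alP n (TE hq)) from rfl]
    rw [wext_Wd h', w_char hw hn hq]
    constructor
    · rintro ⟨j, hj, h1, h2⟩
      rcases Nat.eq_zero_or_pos j with h0 | hpos
      · subst h0
        left
        rw [pB_zero hw hn hq] at h2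
        omega
      · right
        obtain ⟨i, rfl⟩ : ∃ i, j = i + 1 := ⟨j - 1, by omega⟩
        have hiK : i < K := by omega
        refine ⟨⟨i, hiK⟩, ?_, ?_⟩
        · rw [← cB_succ hq ⟨i, hiK⟩]; exact h1
        · have := pB_succ hw hq ⟨i, hiK⟩
          simp only at this
          rw [this] at h2
          omega
    · rintro (h0 | ⟨j, h1, h2⟩)
      · refine ⟨0, by omega, ?_, ?_⟩
        · rw [h'.c0]; omega
        · rw [pB_zero hw hn hq]; omega
      · refine ⟨(j:ℕ)+1, by omega, ?_, ?_⟩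
        · rw [cB_succ hq j]; exact h1
        · rw [pB_succ hw hq j]; omega
  exact Bool.coe_iff_coe.1 hiff

/-- The main equivalence. -/
noncomputable def dyckGP (hn : 1 ≤ n) (K : ℕ) :
    {w : Fin (2*n) → Bool // IsDyck n w ∧ peaks w = K + 1} ≃ GP n K where
  toFun x := pE x.2.1 (by rw [pkF_card, x.2.2])
  invFun p := ⟨toW n p, toW_dyck hn p, toW_peaks hn p⟩
  left_inv x := Subtype.ext (toW_pE x.2.1 hn _)
  right_inv p := by
    apply Subtype.ext
    apply Prod.ext
    · funext j
      exact SE_toW hn p j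
    · funext j
      exact TE_toW hn p j

end RT

/-! ### Counting monotone tuples -/

/-- strictly monotone `l`-tuples with values in `[1, m]` -/
def stm (l m : ℕ) : Type :=
  {f : Fin l → ℕ // StrictMono f ∧ ∀ j, 1 ≤ f j ∧ f j ≤ m}

section StmCount
variable {l m : ℕ}

def stmFun (f : stm l m) (j : Fin l) : Fin m :=
  ⟨f.1 j - 1, by have := (f.2.2 j).1; have := (f.2.2 j).2; omega⟩

lemma stmFun_mono (f : stm l m) : StrictMono (stmFun f) := by
  intro a b hab
  have h1 := (f.2.2 a).1
  have hlt := f.2.1 hab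
  show (f.1 a - 1 : ℕ) < f.1 b - 1
  omega

def stmToFin (f : stm l m) : {s : Finset (Fin m) // s.card = l} :=
  ⟨Finset.univ.image (stmFun f), by
    rw [Finset.card_image_of_injective _ (stmFun_mono f).injective, Finset.card_univ,
      Fintype.card_fin]⟩

noncomputable def finToStm (s : {s : Finset (Fin m) // s.card = l}) : stm l m :=
  ⟨fun j => ((s.1.orderEmbOfFin s.2 j : Fin m) : ℕ) + 1, by
    intro a b hab
    have : ((s.1.orderEmbOfFin s.2 a : Fin m) : ℕ) < ((s.1.orderEmbOfFin s.2 b : Fin m) : ℕ) :=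
      (s.1.orderEmbOfFin s.2).strictMono hab
    show ((s.1.orderEmbOfFin s.2 a : Fin m) : ℕ) + 1 < ((s.1.orderEmbOfFin s.2 b : Fin m) : ℕ) + 1
    omega, by
    intro j
    have := (s.1.orderEmbOfFin s.2 j).isLt
    show 1 ≤ ((s.1.orderEmbOfFin s.2 j : Fin m) : ℕ) + 1 ∧
      ((s.1.orderEmbOfFin s.2 j : Fin m) : ℕ) + 1 ≤ m
    omega⟩

noncomputable def stmEquiv (l m : ℕ) : stm l m ≃ {s : Finset (Fin m) // s.card = l} where
  toFun := stmToFin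
  invFun := finToStm
  left_inv := by
    rintro ⟨f, hmono, hb⟩
    apply Subtype.ext
    funext j
    show (((stmToFin ⟨f, hmono, hb⟩).1.orderEmbOfFin (stmToFin ⟨f, hmono, hb⟩).2 j : Fin m) : ℕ)
        + 1 = f j
    have huniq := Finset.orderEmbOfFin_unique (stmToFin ⟨f, hmono, hb⟩).2
      (f := stmFun ⟨f, hmono, hb⟩)
      (fun x => Finset.mem_image_of_mem _ (Finset.mem_univ x)) (stmFun_mono _)
    rw [← huniq]
    show (f j - 1) + 1 = f j
    have := (hb j).1
    omega
  right_inv := by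
    rintro ⟨s, hs⟩
    apply Subtype.ext
    show Finset.univ.image (stmFun (finToStm ⟨s, hs⟩)) = s
    have hfn : stmFun (finToStm ⟨s, hs⟩) = fun j => s.orderEmbOfFin hs j := by
      funext j
      apply Fin.ext
      show ((s.orderEmbOfFin hs j : Fin m) : ℕ) + 1 - 1 = _
      omega
    rw [hfn]
    apply Finset.coe_injective
    rw [Finset.coe_image, Finset.coe_univ, Set.image_univ]
    exact Finset.range_orderEmbOfFin s hs

end StmCount

lemma sm_lt {l : ℕ} {f : Fin l → ℕ} (hf : StrictMono f) {a b : ℕ} (ha : a < l) (hb : b < l)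
    (hab : a < b) : f ⟨a, ha⟩ < f ⟨b, hb⟩ := hf hab

lemma sm_le {l : ℕ} {f : Fin l → ℕ} (hf : StrictMono f) {a b : ℕ} (ha : a < l) (hb : b < l)
    (hab : a ≤ b) : f ⟨a, ha⟩ ≤ f ⟨b, hb⟩ := hf.monotone hab

lemma sm_le' {l : ℕ} {f : Fin l → ℕ} (hf : StrictMono f) {a : ℕ} {ha : a < l} {b : Fin l}
    (hab : a ≤ (b:ℕ)) : f ⟨a, ha⟩ ≤ f b := hf.monotone hab

lemma sm_le'' {l : ℕ} {f : Fin l → ℕ} (hf : StrictMono f) {a : ℕ} {ha : a < l} {b : Fin l}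
    (hab : (b:ℕ) ≤ a) : f b ≤ f ⟨a, ha⟩ := hf.monotone hab

lemma fc {l : ℕ} (f : Fin l → ℕ) {a : ℕ} {ha : a < l} {b : Fin l} (h : a = (b : ℕ)) :
    f ⟨a, ha⟩ = f b := by
  congr 1
  exact Fin.ext h

noncomputable instance (l m : ℕ) : Fintype (stm l m) :=
  Fintype.ofEquiv _ (stmEquiv l m).symm

lemma card_stm (l m : ℕ) : Nat.card (stm l m) = m.choose l := by
  rw [Nat.card_congr (stmEquiv l m), Nat.card_eq_fintype_card, Fintype.card_finset_len,
    Fintype.card_fin]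


/-! ### Domination and the reflection bijection -/

def Dom {mb K : ℕ} (q : stm K mb × stm K mb) : Prop := ∀ j, q.2.1 j ≤ q.1.1 j

instance {mb K : ℕ} (q : stm K mb × stm K mb) : Decidable (Dom q) := by
  unfold Dom; infer_instance

def gpEquiv (n K : ℕ) : GP n K ≃ {q : stm K (n-1) × stm K (n-1) // Dom q} where
  toFun p := ⟨(⟨p.1.1, p.2.1, fun j => ⟨le_trans (p.2.2.2.1 j) (p.2.2.2.2.2 j), p.2.2.2.2.1 j⟩⟩,
               ⟨p.1.2, p.2.2.1, fun j => ⟨p.2.2.2.1 j, le_trans (p.2.2.2.2.2 j) (p.2.2.2.2.1 j)⟩⟩),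
              fun j => p.2.2.2.2.2 j⟩
  invFun q := ⟨(q.1.1.1, q.1.2.1), q.1.1.2.1, q.1.2.2.1, fun j => (q.1.2.2.2 j).1,
    fun j => (q.1.1.2.2 j).2, q.2⟩
  left_inv p := rfl
  right_inv q := rfl

section Bad
variable {mb K' : ℕ}

lemma bad_ex {q : stm (K'+1) mb × stm (K'+1) mb} (h : ¬ Dom q) :
    (Finset.univ.filter (fun j : Fin (K'+1) => q.1.1 j < q.2.1 j)).Nonempty := by
  unfold Dom at h
  push_neg at h
  obtain ⟨j, hj⟩ := h
  exact ⟨j, by simp [hj]⟩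

noncomputable def vio (q : stm (K'+1) mb × stm (K'+1) mb) (h : ¬ Dom q) : Fin (K'+1) :=
  (Finset.univ.filter (fun j : Fin (K'+1) => q.1.1 j < q.2.1 j)).min' (bad_ex h)

lemma vio_spec (q : stm (K'+1) mb × stm (K'+1) mb) (h : ¬ Dom q) :
    q.1.1 (vio q h) < q.2.1 (vio q h) := by
  have := Finset.min'_mem _ (bad_ex h)
  exact (Finset.mem_filter.1 this).2

lemma vio_min (q : stm (K'+1) mb × stm (K'+1) mb) (h : ¬ Dom q) {j : Fin (K'+1)}
    (hj : j < vio q h) : q.2.1 j ≤ q.1.1 j := by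
  by_contra hc
  push_neg at hc
  have hmem : j ∈ Finset.univ.filter (fun j : Fin (K'+1) => q.1.1 j < q.2.1 j) := by
    simp [hc]
  have := Finset.min'_le _ j hmem
  exact absurd (lt_of_le_of_lt this hj) (lt_irrefl _)

noncomputable def badV (q : stm (K'+1) mb × stm (K'+1) mb) (h : ¬ Dom q) : Fin (K'+2) → ℕ :=
  fun r => if hr : (r:ℕ) ≤ (vio q h : ℕ) then
    q.1.1 ⟨r, by have := (vio q h).isLt; omega⟩
  else q.2.1 ⟨(r:ℕ)-1, by have := r.isLt; omega⟩

noncomputable def badU (q : stm (K'+1) mb × stm (K'+1) mb) (h : ¬ Dom q) : Fin K' → ℕ :=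
  fun r => if (r:ℕ) < (vio q h : ℕ) then
    q.2.1 ⟨r, by have := r.isLt; omega⟩
  else q.1.1 ⟨(r:ℕ)+1, by have := r.isLt; omega⟩

lemma badV_mono (q : stm (K'+1) mb × stm (K'+1) mb) (h : ¬ Dom q) : StrictMono (badV q h) := by
  intro a b hab
  have hab' : (a:ℕ) < (b:ℕ) := hab
  have hS := q.1.2.1
  have hT := q.2.2.1
  have hi := (vio q h).isLt
  unfold badV
  split_ifs with h1 h2 h2
  · exact sm_lt hS _ _ hab'
  · -- a ≤ i < b
    calc q.1.1 ⟨(a:ℕ), _⟩ ≤ q.1.1 (vio q h) := sm_le' hS h1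
      _ < q.2.1 (vio q h) := vio_spec q h
      _ ≤ q.2.1 ⟨(b:ℕ)-1, _⟩ := sm_le'' hT (by omega)
  · omega
  · exact sm_lt hT _ _ (by omega)

lemma badV_bounds (q : stm (K'+1) mb × stm (K'+1) mb) (h : ¬ Dom q) (r : Fin (K'+2)) :
    1 ≤ badV q h r ∧ badV q h r ≤ mb := by
  unfold badV
  split_ifs with h1
  · exact q.1.2.2 _
  · exact q.2.2.2 _

lemma badU_mono (q : stm (K'+1) mb × stm (K'+1) mb) (h : ¬ Dom q) : StrictMono (badU q h) := by
  intro a b hab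
  have hab' : (a:ℕ) < (b:ℕ) := hab
  have hS := q.1.2.1
  have hT := q.2.2.1
  have hi := (vio q h).isLt
  unfold badU
  split_ifs with h1 h2 h2
  · exact sm_lt hT _ _ hab'
  · -- a < i ≤ b
    calc q.2.1 ⟨(a:ℕ), _⟩ ≤ q.1.1 ⟨(a:ℕ), _⟩ := vio_min q h (by exact h1)
      _ < q.1.1 ⟨(b:ℕ)+1, _⟩ := sm_lt hS _ _ (by omega)
  · omega
  · exact sm_lt hS _ _ (by omega)

lemma badU_bounds (q : stm (K'+1) mb × stm (K'+1) mb) (h : ¬ Dom q) (r : Fin K') :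
    1 ≤ badU q h r ∧ badU q h r ≤ mb := by
  unfold badU
  split_ifs with h1
  · exact q.2.2.2 _
  · exact q.1.2.2 _

noncomputable def badToFun (x : {q : stm (K'+1) mb × stm (K'+1) mb // ¬ Dom q}) :
    stm (K'+2) mb × stm K' mb :=
  (⟨badV x.1 x.2, badV_mono x.1 x.2, badV_bounds x.1 x.2⟩,
   ⟨badU x.1 x.2, badU_mono x.1 x.2, badU_bounds x.1 x.2⟩)


/-- selection predicate for the inverse map -/
def iP (y : stm (K'+2) mb × stm K' mb) (j : Fin (K'+1)) : Prop :=
  (j:ℕ) = K' ∨ ∃ h : (j:ℕ) < K',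
    y.1.1 ⟨(j:ℕ), by have := j.isLt; omega⟩ < y.2.1 ⟨(j:ℕ), h⟩

open Classical in
noncomputable def iR (y : stm (K'+2) mb × stm K' mb) : Fin (K'+1) :=
  (Finset.univ.filter (iP y)).min' ⟨⟨K', by omega⟩, by simp [iP]⟩

open Classical in
lemma iR_spec (y : stm (K'+2) mb × stm K' mb) : iP y (iR y) := by
  have := Finset.min'_mem (Finset.univ.filter (iP y)) ⟨⟨K', by omega⟩, by simp [iP]⟩
  rw [Finset.mem_filter] at this
  exact this.2

open Classical in
lemma iR_min (y : stm (K'+2) mb × stm K' mb) {j : Fin (K'+1)} (hj : j < iR y) : ¬ iP y j := by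
  intro hc
  have hmem : j ∈ Finset.univ.filter (iP y) := Finset.mem_filter.2 ⟨Finset.mem_univ j, hc⟩
  have := Finset.min'_le _ j hmem
  exact absurd (lt_of_le_of_lt this hj) (lt_irrefl _)

lemma iR_vio (y : stm (K'+2) mb × stm K' mb) (h : (iR y :ℕ) < K') :
    y.1.1 ⟨(iR y:ℕ), by omega⟩ < y.2.1 ⟨(iR y:ℕ), h⟩ := by
  rcases iR_spec y with h0 | ⟨h', hlt⟩
  · omega
  · exact hlt

lemma iR_dom (y : stm (K'+2) mb × stm K' mb) {j : ℕ} (hjK : j < K')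
    (hlt : j < (iR y:ℕ)) :
    y.2.1 ⟨j, hjK⟩ ≤ y.1.1 ⟨j, by omega⟩ := by
  have hnp := iR_min y (j := ⟨j, by have := (iR y).isLt; omega⟩) hlt
  unfold iP at hnp
  push_neg at hnp
  exact hnp.2 hjK

noncomputable def badS (y : stm (K'+2) mb × stm K' mb) : Fin (K'+1) → ℕ := fun r =>
  if hr : (r:ℕ) ≤ (iR y : ℕ) then y.1.1 ⟨(r:ℕ), by have := (iR y).isLt; omega⟩
  else y.2.1 ⟨(r:ℕ)-1, by have := r.isLt; omega⟩

noncomputable def badT (y : stm (K'+2) mb × stm K' mb) : Fin (K'+1) → ℕ := fun r =>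
  if hr : (r:ℕ) < (iR y : ℕ) then y.2.1 ⟨(r:ℕ), by have := (iR y).isLt; omega⟩
  else y.1.1 ⟨(r:ℕ)+1, by have := r.isLt; omega⟩

lemma badS_mono (y : stm (K'+2) mb × stm K' mb) : StrictMono (badS y) := by
  intro a b hab
  have hab' : (a:ℕ) < (b:ℕ) := hab
  have hV := y.1.2.1
  have hU := y.2.2.1
  have hi := (iR y).isLt
  have hb := b.isLt
  unfold badS
  split_ifs with h1 h2 h2
  · exact sm_lt hV _ _ hab'
  · -- a ≤ i < b  (so i < K')
    have hiK : (iR y:ℕ) < K' := by omega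
    calc y.1.1 ⟨(a:ℕ), _⟩ ≤ y.1.1 ⟨(iR y:ℕ), by omega⟩ := sm_le hV _ _ h1
      _ < y.2.1 ⟨(iR y:ℕ), hiK⟩ := iR_vio y hiK
      _ ≤ y.2.1 ⟨(b:ℕ)-1, _⟩ := sm_le hU _ _ (by omega)
  · omega
  · exact sm_lt hU _ _ (by omega)

lemma badS_bounds (y : stm (K'+2) mb × stm K' mb) (r : Fin (K'+1)) :
    1 ≤ badS y r ∧ badS y r ≤ mb := by
  unfold badS
  split_ifs with h1
  · exact y.1.2.2 _
  · exact y.2.2.2 _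

lemma badT_mono (y : stm (K'+2) mb × stm K' mb) : StrictMono (badT y) := by
  intro a b hab
  have hab' : (a:ℕ) < (b:ℕ) := hab
  have hV := y.1.2.1
  have hU := y.2.2.1
  have hi := (iR y).isLt
  unfold badT
  split_ifs with h1 h2 h2
  · exact sm_lt hU _ _ hab'
  · -- a < i ≤ b
    calc y.2.1 ⟨(a:ℕ), _⟩ ≤ y.1.1 ⟨(a:ℕ), _⟩ := iR_dom y (by omega) h1
      _ < y.1.1 ⟨(b:ℕ)+1, _⟩ := sm_lt hV _ _ (by omega)
  · omega
  · exact sm_lt hV _ _ (by omega)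

lemma badT_bounds (y : stm (K'+2) mb × stm K' mb) (r : Fin (K'+1)) :
    1 ≤ badT y r ∧ badT y r ≤ mb := by
  unfold badT
  split_ifs with h1
  · exact y.2.2.2 _
  · exact y.1.2.2 _

lemma bad_not_dom (y : stm (K'+2) mb × stm K' mb) :
    ¬ Dom ((⟨badS y, badS_mono y, badS_bounds y⟩, ⟨badT y, badT_mono y, badT_bounds y⟩) :
      stm (K'+1) mb × stm (K'+1) mb) := by
  unfold Dom
  push_neg
  refine ⟨iR y, ?_⟩
  show badS y (iR y) < badT y (iR y)
  unfold badS badT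
  rw [dif_pos (le_refl _), dif_neg (lt_irrefl _)]
  exact sm_lt y.1.2.1 _ _ (by omega)


/-! evaluation lemmas -/

lemma badV_le (q : stm (K'+1) mb × stm (K'+1) mb) (h : ¬ Dom q) (r : Fin (K'+2))
    (hle : (r:ℕ) ≤ (vio q h : ℕ)) (pf : (r:ℕ) < K'+1) :
    badV q h r = q.1.1 ⟨(r:ℕ), pf⟩ := by
  unfold badV; rw [dif_pos hle]

lemma badV_gt (q : stm (K'+1) mb × stm (K'+1) mb) (h : ¬ Dom q) (r : Fin (K'+2))
    (hgt : ¬ (r:ℕ) ≤ (vio q h : ℕ)) (pf : (r:ℕ)-1 < K'+1) :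
    badV q h r = q.2.1 ⟨(r:ℕ)-1, pf⟩ := by
  unfold badV; rw [dif_neg hgt]

lemma badU_lt (q : stm (K'+1) mb × stm (K'+1) mb) (h : ¬ Dom q) (r : Fin K')
    (hlt : (r:ℕ) < (vio q h : ℕ)) (pf : (r:ℕ) < K'+1) :
    badU q h r = q.2.1 ⟨(r:ℕ), pf⟩ := by
  unfold badU; rw [if_pos hlt]

lemma badU_ge (q : stm (K'+1) mb × stm (K'+1) mb) (h : ¬ Dom q) (r : Fin K')
    (hge : ¬ (r:ℕ) < (vio q h : ℕ)) (pf : (r:ℕ)+1 < K'+1) :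
    badU q h r = q.1.1 ⟨(r:ℕ)+1, pf⟩ := by
  unfold badU; rw [if_neg hge]

lemma badS_le (y : stm (K'+2) mb × stm K' mb) (r : Fin (K'+1))
    (hle : (r:ℕ) ≤ (iR y : ℕ)) (pf : (r:ℕ) < K'+2) :
    badS y r = y.1.1 ⟨(r:ℕ), pf⟩ := by
  unfold badS; rw [dif_pos hle]

lemma badS_gt (y : stm (K'+2) mb × stm K' mb) (r : Fin (K'+1))
    (hgt : ¬ (r:ℕ) ≤ (iR y : ℕ)) (pf : (r:ℕ)-1 < K') :
    badS y r = y.2.1 ⟨(r:ℕ)-1, pf⟩ := by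
  unfold badS; rw [dif_neg hgt]

lemma badT_lt (y : stm (K'+2) mb × stm K' mb) (r : Fin (K'+1))
    (hlt : (r:ℕ) < (iR y : ℕ)) (pf : (r:ℕ) < K') :
    badT y r = y.2.1 ⟨(r:ℕ), pf⟩ := by
  unfold badT; rw [dif_pos hlt]

lemma badT_ge (y : stm (K'+2) mb × stm K' mb) (r : Fin (K'+1))
    (hge : ¬ (r:ℕ) < (iR y : ℕ)) (pf : (r:ℕ)+1 < K'+2) :
    badT y r = y.1.1 ⟨(r:ℕ)+1, pf⟩ := by
  unfold badT; rw [dif_neg hge]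

noncomputable def badInvFun (y : stm (K'+2) mb × stm K' mb) :
    {q : stm (K'+1) mb × stm (K'+1) mb // ¬ Dom q} :=
  ⟨(⟨badS y, badS_mono y, badS_bounds y⟩, ⟨badT y, badT_mono y, badT_bounds y⟩), bad_not_dom y⟩

lemma iR_badToFun (x : {q : stm (K'+1) mb × stm (K'+1) mb // ¬ Dom q}) :
    iR (badToFun x) = vio x.1 x.2 := by
  classical
  obtain ⟨q, h⟩ := x
  show iR (badToFun ⟨q, h⟩) = vio q h
  have hi := (vio q h).isLt
  apply le_antisymm
  · unfold iR
    apply Finset.min'_le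
    rw [Finset.mem_filter]
    refine ⟨Finset.mem_univ _, ?_⟩
    rcases Nat.lt_or_ge ((vio q h):ℕ) K' with hc | hc
    · right
      refine ⟨hc, ?_⟩
      show badV q h ⟨(vio q h:ℕ), _⟩ < badU q h ⟨(vio q h:ℕ), hc⟩
      rw [badV_le q h _ (by exact le_refl _) (by exact hi),
        badU_ge q h _ (by exact lt_irrefl _) (by exact Nat.succ_lt_succ hc)]
      exact sm_lt q.1.2.1 _ _ (by first | omega | (simp only [Fin.val_mk]; omega))
    · left
      omega
  · by_contra hlt
    push_neg at hlt
    have hjlt : (iR (badToFun ⟨q,h⟩):ℕ) < (vio q h:ℕ) := hlt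
    rcases iR_spec (badToFun ⟨q,h⟩) with h0 | ⟨h', hv⟩
    · omega
    · have e1 := badV_le q h ⟨(iR (badToFun ⟨q,h⟩):ℕ), by omega⟩
        (by first | omega | (simp only [Fin.val_mk]; omega)) (by first | omega | (simp only [Fin.val_mk]; omega))
      have e2 := badU_lt q h ⟨(iR (badToFun ⟨q,h⟩):ℕ), h'⟩
        (by first | omega | (simp only [Fin.val_mk]; omega)) (by first | omega | (simp only [Fin.val_mk]; omega))
      have hdom := vio_min q h (j := ⟨(iR (badToFun ⟨q,h⟩):ℕ), by omega⟩) (by exact hjlt)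
      rw [show ((badToFun ⟨q,h⟩).1.1 : Fin (K'+2) → ℕ) = badV q h from rfl] at hv
      rw [show ((badToFun ⟨q,h⟩).2.1 : Fin K' → ℕ) = badU q h from rfl] at hv
      rw [e1, e2] at hv
      have hle : q.2.1 ⟨(iR (badToFun ⟨q,h⟩):ℕ), _⟩ ≤ q.1.1 ⟨(iR (badToFun ⟨q,h⟩):ℕ), _⟩ := hdom
      exact absurd hv (not_lt.2 hle)

noncomputable def badEquiv (mb K' : ℕ) :
    {q : stm (K'+1) mb × stm (K'+1) mb // ¬ Dom q} ≃ stm (K'+2) mb × stm K' mb where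
  toFun := badToFun
  invFun := badInvFun
  left_inv := by
    rintro ⟨q, h⟩
    have hiR := iR_badToFun (⟨q, h⟩ : {q : stm (K'+1) mb × stm (K'+1) mb // ¬ Dom q})
    have hiRv : (iR (badToFun ⟨q,h⟩) : ℕ) = (vio q h : ℕ) := congrArg Fin.val hiR
    have hi := (vio q h).isLt
    apply Subtype.ext
    apply Prod.ext
    · apply Subtype.ext
      funext r
      have hrK := r.isLt
      show badS (badToFun ⟨q,h⟩) r = q.1.1 r
      rcases le_or_gt (r:ℕ) (vio q h : ℕ) with hr | hr
      · rw [badS_le _ r (by omega) (by omega)]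
        show badV q h _ = _
        rw [badV_le q h _ (by exact hr) (by exact hrK)]
      · rw [badS_gt _ r (by omega) (by omega)]
        show badU q h _ = _
        rw [badU_ge q h _ (by first | omega | (simp only [Fin.val_mk]; omega)) (by first | omega | (simp only [Fin.val_mk]; omega))]
        exact fc _ (by first | omega | (simp only [Fin.val_mk]; omega))
    · apply Subtype.ext
      funext r
      have hrK := r.isLt
      show badT (badToFun ⟨q,h⟩) r = q.2.1 r
      rcases Nat.lt_or_ge (r:ℕ) (vio q h : ℕ) with hr | hr
      · rw [badT_lt _ r (by omega) (by omega)]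
        show badU q h _ = _
        rw [badU_lt q h _ (by exact hr) (by exact hrK)]
      · rw [badT_ge _ r (by omega) (by omega)]
        show badV q h _ = _
        rw [badV_gt q h _ (by first | omega | (simp only [Fin.val_mk]; omega)) (by first | omega | (simp only [Fin.val_mk]; omega))]
        exact fc _ (by first | omega | (simp only [Fin.val_mk]; omega))
  right_inv := by
    intro y
    have hIl := (iR y).isLt
    have hvio : vio (badInvFun y).1 (badInvFun y).2 = iR y := by
      apply le_antisymm
      · apply Finset.min'_le
        rw [Finset.mem_filter]
        refine ⟨Finset.mem_univ _, ?_⟩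
        show badS y (iR y) < badT y (iR y)
        rw [badS_le y _ (le_refl _) (by omega), badT_ge y _ (lt_irrefl _) (by omega)]
        exact sm_lt y.1.2.1 _ _ (by first | omega | (simp only [Fin.val_mk]; omega))
      · by_contra hlt
        push_neg at hlt
        have hjlt : ((vio (badInvFun y).1 (badInvFun y).2):ℕ) < (iR y:ℕ) := hlt
        have hsp := vio_spec (badInvFun y).1 (badInvFun y).2
        have hvK := (vio (badInvFun y).1 (badInvFun y).2).isLt
        rw [show ((badInvFun y).1.1.1 : Fin (K'+1) → ℕ) = badS y from rfl] at hsp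
        rw [show ((badInvFun y).1.2.1 : Fin (K'+1) → ℕ) = badT y from rfl] at hsp
        rw [badS_le y _ (by omega) (by omega), badT_lt y _ (by omega) (by omega)] at hsp
        exact absurd hsp (not_lt.2 (iR_dom y (by omega) (by omega)))
    have hvioN : ((vio (badInvFun y).1 (badInvFun y).2):ℕ) = (iR y:ℕ) := congrArg Fin.val hvio
    apply Prod.ext
    · apply Subtype.ext
      funext r
      have hrK := r.isLt
      show badV (badInvFun y).1 (badInvFun y).2 r = y.1.1 r
      rcases le_or_gt (r:ℕ) (iR y:ℕ) with hr | hr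
      · rw [badV_le _ _ r (by omega) (by omega)]
        show badS y _ = _
        rw [badS_le y _ (by first | omega | (simp only [Fin.val_mk]; omega)) (by first | omega | (simp only [Fin.val_mk]; omega))]
      · rw [badV_gt _ _ r (by omega) (by omega)]
        show badT y _ = _
        rw [badT_ge y _ (by first | omega | (simp only [Fin.val_mk]; omega)) (by first | omega | (simp only [Fin.val_mk]; omega))]
        exact fc _ (by first | omega | (simp only [Fin.val_mk]; omega))
    · apply Subtype.ext
      funext r
      have hrK := r.isLt
      show badU (badInvFun y).1 (badInvFun y).2 r = y.2.1 r
      rcases Nat.lt_or_ge (r:ℕ) (iR y:ℕ) with hr | hr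
      · rw [badU_lt _ _ r (by omega) (by omega)]
        show badT y _ = _
        rw [badT_lt y _ (by first | omega | (simp only [Fin.val_mk]; omega)) (by first | omega | (simp only [Fin.val_mk]; omega))]
      · rw [badU_ge _ _ r (by omega) (by omega)]
        show badS y _ = _
        rw [badS_gt y _ (by first | omega | (simp only [Fin.val_mk]; omega)) (by first | omega | (simp only [Fin.val_mk]; omega))]
        exact fc _ (by first | omega | (simp only [Fin.val_mk]; omega))

end Bad

/-! ### Cardinality computations -/

section Cards

lemma card_bad_eq (mb K' : ℕ) :
    Nat.card {q : stm (K'+1) mb × stm (K'+1) mb // ¬ Dom q}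
      = mb.choose (K'+2) * mb.choose K' := by
  rw [Nat.card_congr (badEquiv mb K'), Nat.card_prod, card_stm, card_stm]

lemma card_dom_split (mb K : ℕ) :
    Nat.card {q : stm K mb × stm K mb // Dom q}
      + Nat.card {q : stm K mb × stm K mb // ¬ Dom q}
      = mb.choose K * mb.choose K := by
  rw [Nat.card_eq_fintype_card, Nat.card_eq_fintype_card]
  have h1 : Fintype.card {q : stm K mb × stm K mb // ¬ Dom q}
      = Fintype.card (stm K mb × stm K mb)
        - Fintype.card {q : stm K mb × stm K mb // Dom q} :=
    Fintype.card_subtype_compl _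
  have h2 : Fintype.card {q : stm K mb × stm K mb // Dom q}
      ≤ Fintype.card (stm K mb × stm K mb) :=
    Fintype.card_subtype_le _
  have h3 : Fintype.card (stm K mb × stm K mb) = mb.choose K * mb.choose K := by
    rw [← Nat.card_eq_fintype_card, Nat.card_prod, card_stm]
  omega

lemma card_GP_succ (n K' : ℕ) :
    Nat.card (GP n (K'+1)) + (n-1).choose (K'+2) * (n-1).choose K'
      = (n-1).choose (K'+1) * (n-1).choose (K'+1) := by
  rw [Nat.card_congr (gpEquiv n (K'+1)), ← card_bad_eq (n-1) K']
  exact card_dom_split (n-1) (K'+1)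

lemma card_GP_zero (n : ℕ) : Nat.card (GP n 0) = 1 := by
  have e2 : {q : stm 0 (n-1) × stm 0 (n-1) // Dom q} ≃ (stm 0 (n-1) × stm 0 (n-1)) :=
    Equiv.subtypeUnivEquiv (fun q j => j.elim0)
  rw [Nat.card_congr (gpEquiv n 0), Nat.card_congr e2, Nat.card_prod, card_stm]
  simp

lemma bin_id (n K' : ℕ) (hn : 1 ≤ n) (hkn : K'+2 ≤ n) :
    ((n-1).choose (K'+1) : ℚ) * ((n-1).choose (K'+1) : ℚ)
      = 1/(n:ℚ) * ((n.choose (K'+1) : ℕ) : ℚ) * ((n.choose (K'+2) : ℕ) : ℚ)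
        + ((n-1).choose (K'+2) : ℚ) * ((n-1).choose K' : ℚ) := by
  rcases Nat.eq_or_lt_of_le hkn with heq | hlt
  · obtain rfl : n = K'+2 := heq.symm
    have h1 : (K'+2-1) = K'+1 := rfl
    rw [h1]
    rw [Nat.choose_self, Nat.choose_eq_zero_of_lt (by omega : K'+1 < K'+2)]
    rw [Nat.choose_succ_self_right, Nat.choose_self]
    push_cast
    have h2 : ((K':ℚ)+2) ≠ 0 := by positivity
    field_simp
    ring
  · obtain ⟨e, rfl⟩ : ∃ e, n = K'+e+3 := ⟨n - (K'+3), by omega⟩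
    have h1 : (K'+e+3-1) = K'+e+2 := rfl
    rw [h1]
    rw [Nat.cast_choose ℚ (by omega : K'+1 ≤ K'+e+2),
      Nat.cast_choose ℚ (by omega : K'+2 ≤ K'+e+2),
      Nat.cast_choose ℚ (by omega : K' ≤ K'+e+2),
      Nat.cast_choose ℚ (by omega : K'+1 ≤ K'+e+3),
      Nat.cast_choose ℚ (by omega : K'+2 ≤ K'+e+3)]
    rw [show K'+e+2-(K'+1) = e+1 by omega, show K'+e+2-(K'+2) = e by omega,
      show K'+e+2-K' = e+2 by omega, show K'+e+3-(K'+1) = e+2 by omega,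
      show K'+e+3-(K'+2) = e+1 by omega]
    have hf1 : ((Nat.factorial (K'+e+3) : ℕ) : ℚ)
        = ((K'+e+3 : ℕ) : ℚ) * ((Nat.factorial (K'+e+2) : ℕ) : ℚ) := by
      rw [show K'+e+3 = (K'+e+2)+1 from rfl, Nat.factorial_succ]
      push_cast
      ring
    have hf2 : ((Nat.factorial (K'+2) : ℕ) : ℚ)
        = ((K':ℚ)+2) * ((K':ℚ)+1) * ((Nat.factorial K' : ℕ) : ℚ) := by
      rw [show K'+2 = (K'+1)+1 from rfl, Nat.factorial_succ, Nat.factorial_succ]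
      push_cast
      ring
    have hf3 : ((Nat.factorial (K'+1) : ℕ) : ℚ) = ((K':ℚ)+1) * ((Nat.factorial K' : ℕ) : ℚ) := by
      rw [Nat.factorial_succ]
      push_cast
      ring
    have hf4 : ((Nat.factorial (e+2) : ℕ) : ℚ)
        = ((e:ℚ)+2) * ((e:ℚ)+1) * ((Nat.factorial e : ℕ) : ℚ) := by
      rw [show e+2 = (e+1)+1 from rfl, Nat.factorial_succ, Nat.factorial_succ]
      push_cast
      ring
    have hf5 : ((Nat.factorial (e+1) : ℕ) : ℚ) = ((e:ℚ)+1) * ((Nat.factorial e : ℕ) : ℚ) := by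
      rw [Nat.factorial_succ]
      push_cast
      ring
    rw [hf1]
    simp only [hf2, hf3, hf4, hf5]
    have hK0 : ((Nat.factorial K' : ℕ) : ℚ) ≠ 0 := Nat.cast_ne_zero.2 (Nat.factorial_ne_zero _)
    have he0 : ((Nat.factorial e : ℕ) : ℚ) ≠ 0 := Nat.cast_ne_zero.2 (Nat.factorial_ne_zero _)
    have hb0 : ((Nat.factorial (K'+e+2) : ℕ) : ℚ) ≠ 0 :=
      Nat.cast_ne_zero.2 (Nat.factorial_ne_zero _)
    have hn0 : ((K'+e+3 : ℕ) : ℚ) ≠ 0 := Nat.cast_ne_zero.2 (by omega)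
    push_cast
    push_cast at hn0 hb0
    field_simp
    ring

end Cards
end Nara

theorem stmt11 (n k : ℕ) (hn : 1 ≤ n) (hk1 : 1 ≤ k) (hkn : k ≤ n) :
    (Nat.card {w : Fin (2 * n) → Bool // IsDyck n w ∧ peaks w = k} : ℚ)
      = (1 / (n : ℚ)) * (n.choose (k - 1) : ℚ) * (n.choose k : ℚ) := by
  obtain ⟨K, rfl⟩ : ∃ K, k = K + 1 := ⟨k - 1, by omega⟩
  have hcard : Nat.card {w : Fin (2 * n) → Bool // IsDyck n w ∧ peaks w = K+1}
      = Nat.card (Nara.GP n K) := Nat.card_congr (Nara.dyckGP hn K)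
  rw [hcard]
  cases K with
  | zero =>
    rw [Nara.card_GP_zero]
    have h0 : (0+1-1) = 0 := rfl
    rw [h0, Nat.choose_zero_right, Nat.choose_one_right]
    have hn0 : (n:ℚ) ≠ 0 := Nat.cast_ne_zero.2 (by omega)
    field_simp
  | succ K' =>
    have hsplit := Nara.card_GP_succ n K'
    have hQ : (Nat.card (Nara.GP n (K'+1)) : ℚ)
        + ((n-1).choose (K'+2) : ℚ) * ((n-1).choose K' : ℚ)
        = ((n-1).choose (K'+1) : ℚ) * ((n-1).choose (K'+1) : ℚ) := by
      exact_mod_cast congrArg (Nat.cast (R := ℚ)) hsplit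
    have hid := Nara.bin_id n K' hn (by omega)
    have h1 : (K'+1+1-1) = K'+1 := rfl
    rw [h1]
    have h2 : (K'+1+1) = K'+2 := rfl
    rw [h2]
    linarith [hQ, hid]
end

section
/- For every m ≥ 1 and n ≥ 1, the number of lattice paths from (0,0) to ((m+1)n, 0) staying weakly above the x-axis using steps (1, m) and (1, -1) equals the Fuss–Catalan number (1/(mn+1))·C((m+1)n, n). -/
/-- An `m`-ary path of length `(m+1)n`: a sequence of `(m+1)n` steps, each `U = (1, m)`
or `D = (1, -1)`, with exactly `n` `U`-steps (hence ending at `((m+1)n, 0)`), staying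
weakly above the x-axis: after every prefix, `m · #U ≥ #D`. -/
def IsMAryPath (m n : ℕ) (w : Fin ((m + 1) * n) → Bool) : Prop :=
  upCount w ((m + 1) * n) = n ∧
    ∀ i ≤ (m + 1) * n, downCount w i ≤ m * upCount w i

namespace Fuss

/-- step value -/
def stepZ (m : ℕ) (b : Bool) : ℤ := if b then (m : ℤ) else -1

/-- periodic extension of a word of length K+1 -/
def vext {K : ℕ} (v : Fin (K+1) → Bool) (i : ℕ) : Bool :=
  v ⟨i % (K+1), Nat.mod_lt _ K.succ_pos⟩

/-- partial sums of the periodically extended path -/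
def pS (m : ℕ) {K : ℕ} (v : Fin (K+1) → Bool) : ℕ → ℤ
  | 0 => 0
  | (i+1) => pS m v i + stepZ m (vext v i)

/-- number of true entries -/
@[simp] lemma stepZ_true (m : ℕ) : stepZ m true = m := rfl
@[simp] lemma stepZ_false (m : ℕ) : stepZ m false = -1 := rfl

lemma pS_succ (m : ℕ) {K : ℕ} (v : Fin (K+1) → Bool) (i : ℕ) :
    pS m v (i+1) = pS m v i + stepZ m (vext v i) := rfl

lemma vext_of_lt {K : ℕ} (v : Fin (K+1) → Bool) (i : ℕ) (h : i < K+1) :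
    vext v i = v ⟨i, h⟩ := by
  unfold vext
  congr 1
  exact Fin.ext (Nat.mod_eq_of_lt h)

def cnt {K : ℕ} (v : Fin (K+1) → Bool) : ℕ :=
  (Finset.univ.filter fun t => v t = true).card

/-- rotation -/
def rot {K : ℕ} (v : Fin (K+1) → Bool) (k : Fin (K+1)) : Fin (K+1) → Bool :=
  fun i => v (i + k)

lemma vext_rot {K : ℕ} (v : Fin (K+1) → Bool) (k : Fin (K+1)) (t : ℕ) :
    vext (rot v k) t = vext v (t + k.val) := by
  unfold vext rot
  congr 1
  ext
  simp [Fin.add_def, Nat.mod_add_mod]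

lemma vext_period {K : ℕ} (v : Fin (K+1) → Bool) (t : ℕ) :
    vext v (t + (K+1)) = vext v t := by
  unfold vext; congr 1; ext; simp [Nat.add_mod_right]

lemma pS_rot {K : ℕ} (m : ℕ) (v : Fin (K+1) → Bool) (k : Fin (K+1)) (j : ℕ) :
    pS m (rot v k) j = pS m v (k.val + j) - pS m v k.val := by
  induction j with
  | zero => simp [pS]
  | succ j ih =>
      have h1 : k.val + (j+1) = (k.val + j) + 1 := by ring
      rw [h1, pS_succ, pS_succ, ih, vext_rot]
      rw [Nat.add_comm j k.val]
      ring

lemma pS_period {K : ℕ} (m : ℕ) (v : Fin (K+1) → Bool) (i : ℕ) :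
    pS m v (i + (K+1)) = pS m v i + pS m v (K+1) := by
  induction i with
  | zero => simp [pS]
  | succ i ih =>
      have h1 : i + 1 + (K+1) = (i + (K+1)) + 1 := by ring
      rw [h1, pS_succ, ih, vext_period]
      conv_rhs => rw [pS_succ]
      ring

lemma pS_eq_count (m : ℕ) {K : ℕ} (v : Fin (K+1) → Bool) (i : ℕ) :
    pS m v i = (m+1) * (((Finset.range i).filter fun t => vext v t = true).card : ℤ) - i := by
  induction i with
  | zero => simp [pS]
  | succ i ih =>
      rw [pS_succ, ih, Finset.range_add_one, Finset.filter_insert]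
      cases h : vext v i with
      | true =>
          rw [if_pos rfl, Finset.card_insert_of_notMem (by simp), stepZ_true]
          push_cast
          ring
      | false =>
          rw [if_neg (by simp), stepZ_false]
          push_cast
          ring

lemma cnt_eq_range {K : ℕ} (v : Fin (K+1) → Bool) :
    cnt v = ((Finset.range (K+1)).filter fun t => vext v t = true).card := by
  unfold cnt
  rw [Finset.card_filter, Finset.card_filter, ← Fin.sum_univ_eq_sum_range]
  apply Finset.sum_congr rfl
  intro i _
  rw [vext_of_lt v i.val i.isLt, Fin.eta]

lemma pS_full (m n : ℕ) {K : ℕ} (v : Fin (K+1) → Bool) (hK : K = (m+1)*n)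
    (hc : cnt v = n) : pS m v (K+1) = -1 := by
  rw [pS_eq_count, ← cnt_eq_range, hc]
  push_cast [hK]
  ring

lemma pS_drift (m n : ℕ) {K : ℕ} (v : Fin (K+1) → Bool) (hK : K = (m+1)*n)
    (hc : cnt v = n) (i : ℕ) : pS m v (i + (K+1)) = pS m v i - 1 := by
  rw [pS_period, pS_full m n v hK hc]; ring

lemma cnt_rot {K : ℕ} (v : Fin (K+1) → Bool) (k : Fin (K+1)) :
    cnt (rot v k) = cnt v := by
  unfold cnt rot
  rw [Finset.card_filter, Finset.card_filter]
  exact Fintype.sum_equiv (Equiv.addRight k) _ _ (fun i => rfl)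

def Good (m : ℕ) {K : ℕ} (v : Fin (K+1) → Bool) : Prop :=
  ∀ j, 1 ≤ j → j ≤ K → 0 ≤ pS m v j

def GoodAt (m : ℕ) {K : ℕ} (v : Fin (K+1) → Bool) (k : ℕ) : Prop :=
  ∀ j, k < j → j ≤ k + K → pS m v k ≤ pS m v j

lemma good_rot_iff {K : ℕ} (m : ℕ) (v : Fin (K+1) → Bool) (k : Fin (K+1)) :
    Good m (rot v k) ↔ GoodAt m v k.val := by
  constructor
  · intro h j hj1 hj2
    have := h (j - k.val) (by omega) (by omega)
    rw [pS_rot] at this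
    have hj : k.val + (j - k.val) = j := by omega
    rw [hj] at this
    linarith
  · intro h j hj1 hj2
    rw [pS_rot]
    have := h (k.val + j) (by omega) (by omega)
    linarith

lemma exists_min {K : ℕ} (m : ℕ) (v : Fin (K+1) → Bool) :
    ∃ k, k ≤ K ∧ ∀ j ≤ K, pS m v k ≤ pS m v j := by
  obtain ⟨k, hk, hmin⟩ := Finset.exists_min_image (Finset.range (K+1)) (pS m v)
    ⟨0, by simp⟩
  exact ⟨k, by simp at hk; omega, fun j hj => hmin j (by simp; omega)⟩

/-- the cycle lemma: unique good rotation point -/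
lemma existsUnique_goodAt (m n : ℕ) {K : ℕ} (v : Fin (K+1) → Bool) (hK : K = (m+1)*n)
    (hc : cnt v = n) : ∃! k, k ≤ K ∧ GoodAt m v k := by
  classical
  have hex := exists_min m v
  set Q : ℕ → Prop := fun k => k ≤ K ∧ ∀ j ≤ K, pS m v k ≤ pS m v j with hQ
  have hfind := Nat.find_spec hex
  set k₀ := Nat.find hex with hk₀
  have hk₀K : k₀ ≤ K := hfind.1
  have hmin : ∀ j ≤ K, pS m v k₀ ≤ pS m v j := hfind.2
  have hlt : ∀ j < k₀, pS m v k₀ < pS m v j := by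
    intro j hj
    by_contra hcon
    push_neg at hcon
    have hjQ : Q j := ⟨by omega, fun j' hj' => le_trans hcon (hmin j' hj')⟩
    exact Nat.find_min hex hj hjQ
  have hdrift := pS_drift m n v hK hc
  have hgood : GoodAt m v k₀ := by
    intro j hj1 hj2
    by_cases hjK : j ≤ K
    · exact hmin j hjK
    · push_neg at hjK
      have hj' : j = (j - (K+1)) + (K+1) := by omega
      rw [hj', hdrift]
      have h1 : j - (K+1) < k₀ := by omega
      have := hlt _ h1
      omega
  refine ⟨k₀, ⟨hk₀K, hgood⟩, ?_⟩
  rintro k ⟨hkK, hkgood⟩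
  by_contra hne
  rcases Nat.lt_or_ge k k₀ with h | h
  · -- k < k₀
    have h1 := hkgood k₀ h (by omega)
    have h2 := hmin k hkK
    have hkQ : Q k := ⟨hkK, fun j hj => le_trans (le_antisymm h1 h2).le (hmin j hj)⟩
    exact absurd hkQ (Nat.find_min hex h)
  · -- k > k₀
    have hgt : k₀ < k := by omega
    have h1 := hkgood (k₀ + (K+1)) (by omega) (by omega)
    rw [hdrift] at h1
    have h2 := hmin k hkK
    omega

lemma rot_rot {K : ℕ} (v : Fin (K+1) → Bool) (k k' : Fin (K+1)) :
    rot (rot v k) k' = rot v (k' + k) := by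
  funext i; simp [rot, add_assoc]

lemma rot_zero {K : ℕ} (v : Fin (K+1) → Bool) : rot v 0 = v := by
  funext i; simp [rot]

lemma rot_neg_rot {K : ℕ} (v : Fin (K+1) → Bool) (k : Fin (K+1)) :
    rot (rot v k) (-k) = v := by
  rw [rot_rot, neg_add_cancel, rot_zero]

lemma card_cycle (m n : ℕ) {K : ℕ} (hK : K = (m+1)*n) :
    Nat.card {v : Fin (K+1) → Bool // cnt v = n} =
      Nat.card {v : Fin (K+1) → Bool // cnt v = n ∧ Good m v} * (K+1) := by
  classical
  have key : Function.Bijective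
      (fun p : {v : Fin (K+1) → Bool // cnt v = n ∧ Good m v} × Fin (K+1) =>
        (⟨rot p.1.1 p.2, by rw [cnt_rot]; exact p.1.2.1⟩ :
          {v : Fin (K+1) → Bool // cnt v = n})) := by
    constructor
    · rintro ⟨⟨a, hca, hga⟩, j⟩ ⟨⟨a', hca', hga'⟩, j'⟩ h
      simp only [Subtype.mk.injEq] at h
      -- rot a j = rot a' j'
      have hw : cnt (rot a j) = n := by rw [cnt_rot]; exact hca
      obtain ⟨k₀, _, huniq⟩ := existsUnique_goodAt m n (rot a j) hK hw
      have h1 : GoodAt m (rot a j) (-j).val := by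
        rw [← good_rot_iff, rot_neg_rot]; exact hga
      have h2 : GoodAt m (rot a j) (-j').val := by
        rw [← good_rot_iff]
        rw [h, rot_neg_rot]; exact hga'
      have e1 := huniq (-j).val ⟨Nat.lt_succ_iff.mp (-j).isLt, h1⟩
      have e2 := huniq (-j').val ⟨Nat.lt_succ_iff.mp (-j').isLt, h2⟩
      have hjj : j = j' := by
        have : (-j : Fin (K+1)) = -j' := Fin.ext (e1.trans e2.symm)
        exact neg_injective this
      subst hjj
      have haa : a = a' := by
        have := congrArg (fun w => rot w (-j)) h
        simpa [rot_neg_rot] using this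
      simp [haa]
    · rintro ⟨w, hw⟩
      obtain ⟨k₀, ⟨hk₀K, hg⟩, _⟩ := existsUnique_goodAt m n w hK hw
      have hk₀ : k₀ < K + 1 := by omega
      refine ⟨⟨⟨rot w ⟨k₀, hk₀⟩, by rw [cnt_rot]; exact hw, ?_⟩, -⟨k₀, hk₀⟩⟩, ?_⟩
      · rw [good_rot_iff]; exact hg
      · simp only [Subtype.mk.injEq]
        exact rot_neg_rot w ⟨k₀, hk₀⟩
  calc Nat.card {v : Fin (K+1) → Bool // cnt v = n}
      = Nat.card ({v : Fin (K+1) → Bool // cnt v = n ∧ Good m v} × Fin (K+1)) :=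
        (Nat.card_eq_of_bijective _ key).symm
    _ = _ := by rw [Nat.card_prod, Nat.card_eq_fintype_card (α := Fin (K+1)), Fintype.card_fin]

lemma card_all (n : ℕ) {K : ℕ} :
    Nat.card {v : Fin (K+1) → Bool // cnt v = n} = (K+1).choose n := by
  classical
  have e : {v : Fin (K+1) → Bool // cnt v = n} ≃
      {s : Finset (Fin (K+1)) // s.card = n} :=
    { toFun := fun v => ⟨Finset.univ.filter fun t => v.1 t = true, v.2⟩
      invFun := fun s => ⟨fun i => decide (i ∈ s.1), by
        have h : (Finset.univ.filter fun t => decide (t ∈ s.1) = true) = s.1 := by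
          ext i; simp
        unfold cnt
        rw [h]
        exact s.2⟩
      left_inv := by
        rintro ⟨v, hv⟩
        ext i
        simp
      right_inv := by
        rintro ⟨s, hs⟩
        ext i
        simp }
  rw [Nat.card_eq_fintype_card, Fintype.card_congr e, Fintype.card_finset_len,
    Fintype.card_fin]

lemma up_add_down {m : ℕ} (w : Fin m → Bool) (i : ℕ) :
    upCount w i + downCount w i = i := by
  unfold upCount downCount
  have h := Finset.card_filter_add_card_filter_not
    (s := Finset.range i) (p := fun t => wext w t = true)
  rw [Finset.card_range] at h
  conv_rhs => rw [← h]
  congr 1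
  apply congrArg Finset.card
  apply Finset.filter_congr
  intro t _
  cases wext w t <;> simp

lemma vext_snoc {K : ℕ} (w : Fin K → Bool) (t : ℕ) (ht : t ≤ K) :
    vext (Fin.snoc w false) t = wext w t := by
  rw [vext_of_lt _ t (by omega)]
  rcases Nat.lt_or_ge t K with h | h
  · have he : (⟨t, by omega⟩ : Fin (K+1)) = Fin.castSucc ⟨t, h⟩ := rfl
    rw [he, Fin.snoc_castSucc]
    unfold wext
    rw [dif_pos h]
  · have ht' : t = K := by omega
    have he : (⟨t, by omega⟩ : Fin (K+1)) = Fin.last K := by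
      ext
      simpa using ht'
    rw [he, Fin.snoc_last]
    unfold wext
    rw [dif_neg (by omega)]

lemma pS_snoc (m : ℕ) {K : ℕ} (w : Fin K → Bool) (i : ℕ) (hi : i ≤ K + 1) :
    pS m (Fin.snoc w false) i = (m+1) * (upCount w i : ℤ) - i := by
  rw [pS_eq_count]
  have h : (Finset.range i).filter (fun t => vext (Fin.snoc w false) t = true)
      = (Finset.range i).filter fun t => wext w t = true := by
    apply Finset.filter_congr
    intro t htr
    rw [Finset.mem_range] at htr
    rw [vext_snoc w t (by omega)]
  rw [h]
  rfl

lemma cnt_snoc {K : ℕ} (w : Fin K → Bool) :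
    cnt (Fin.snoc w false) = upCount w K := by
  rw [cnt_eq_range]
  unfold upCount
  rw [Finset.range_add_one, Finset.filter_insert, if_neg]
  · apply congrArg
    apply Finset.filter_congr
    intro t htr
    rw [Finset.mem_range] at htr
    rw [vext_snoc w t (by omega)]
  · rw [vext_snoc w K le_rfl]
    unfold wext
    rw [dif_neg (by omega)]
    simp

lemma path_iff (m n : ℕ) (hm : 1 ≤ m) (hn : 1 ≤ n) (w : Fin ((m+1)*n) → Bool) :
    IsMAryPath m n w ↔
      (cnt (Fin.snoc w false) = n ∧ Good m (Fin.snoc w false)) := by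
  have hK1 : 1 ≤ (m+1)*n := by
    have : 1 * 1 ≤ (m+1) * n := Nat.mul_le_mul (by omega) hn
    omega
  constructor
  · rintro ⟨h1, h2⟩
    refine ⟨by rw [cnt_snoc]; exact h1, ?_⟩
    intro j hj1 hj2
    rw [pS_snoc m w j (by omega)]
    have hd := h2 j hj2
    have hud := up_add_down w j
    have h3 : (downCount w j : ℤ) ≤ (m : ℤ) * (upCount w j : ℤ) := by
      exact_mod_cast hd
    have h4 : (upCount w j : ℤ) + (downCount w j : ℤ) = j := by exact_mod_cast hud
    nlinarith
  · rintro ⟨h1, h2⟩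
    rw [cnt_snoc] at h1
    refine ⟨h1, ?_⟩
    intro i hi
    rcases Nat.eq_zero_or_pos i with h0 | h0
    · subst h0
      simp [upCount, downCount]
    · have hg := h2 i h0 hi
      rw [pS_snoc m w i (by omega)] at hg
      have hud := up_add_down w i
      have h4 : (upCount w i : ℤ) + (downCount w i : ℤ) = i := by exact_mod_cast hud
      have h5 : (downCount w i : ℤ) ≤ (m : ℤ) * (upCount w i : ℤ) := by nlinarith
      exact_mod_cast h5

lemma snoc_last_false (m n : ℕ) (hm : 1 ≤ m) (hn : 1 ≤ n) {K : ℕ} (hK : K = (m+1)*n)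
    (a : Fin (K+1) → Bool) (hca : cnt a = n) (hga : Good m a) :
    a (Fin.last K) = false := by
  have hK1 : 1 ≤ K := by
    have : 1 * 1 ≤ (m+1) * n := Nat.mul_le_mul (by omega) hn
    omega
  have hfull : pS m a (K+1) = -1 := pS_full m n a hK hca
  have hstep : pS m a (K+1) = pS m a K + stepZ m (vext a K) := rfl
  have hlast : vext a K = a (Fin.last K) := by
    rw [vext_of_lt a K (by omega)]
    rfl
  have hgK : 0 ≤ pS m a K := hga K hK1 le_rfl
  by_contra hcon
  have hT : a (Fin.last K) = true := by
    cases h : a (Fin.last K)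
    · exact absurd h hcon
    · rfl
  rw [hstep, hlast, hT, stepZ_true] at hfull
  have : (0:ℤ) ≤ (m:ℤ) := by positivity
  omega

lemma card_paths (m n : ℕ) (hm : 1 ≤ m) (hn : 1 ≤ n) :
    Nat.card {w : Fin ((m + 1) * n) → Bool // IsMAryPath m n w} * ((m+1)*n + 1)
      = ((m+1)*n + 1).choose n := by
  classical
  have hbij : Function.Bijective
      (fun w : {w : Fin ((m+1)*n) → Bool // IsMAryPath m n w} =>
        (⟨Fin.snoc w.1 false, (path_iff m n hm hn w.1).mp w.2⟩ :
          {v : Fin ((m+1)*n+1) → Bool // cnt v = n ∧ Good m v})) := by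
    constructor
    · rintro ⟨w, hw⟩ ⟨w', hw'⟩ h
      simp only [Subtype.mk.injEq] at h
      have h2 := congrArg Fin.init h
      simp only [Fin.init_snoc] at h2
      simp [h2]
    · rintro ⟨a, hca, hga⟩
      have hlast := snoc_last_false m n hm hn rfl a hca hga
      have hsnoc : Fin.snoc (Fin.init a) false = a := by
        rw [← hlast, Fin.snoc_init_self]
      refine ⟨⟨Fin.init a, ?_⟩, ?_⟩
      · rw [path_iff m n hm hn, hsnoc]
        exact ⟨hca, hga⟩
      · simp only [Subtype.mk.injEq]
        exact hsnoc
  have h1 : Nat.card {w : Fin ((m+1)*n) → Bool // IsMAryPath m n w}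
      = Nat.card {v : Fin ((m+1)*n+1) → Bool // cnt v = n ∧ Good m v} :=
    Nat.card_eq_of_bijective _ hbij
  rw [h1, ← card_cycle m n rfl, card_all]

end Fuss

theorem stmt12 (m n : ℕ) (hm : 1 ≤ m) (hn : 1 ≤ n) :
    (Nat.card {w : Fin ((m + 1) * n) → Bool // IsMAryPath m n w} : ℚ)
      = (1 / ((m * n : ℚ) + 1)) * (((m + 1) * n).choose n : ℚ) := by
  have key := Fuss.card_paths m n hm hn
  have hle1 : n ≤ (m+1)*n := Nat.le_mul_of_pos_left n (by omega)
  have hle2 : n ≤ (m+1)*n + 1 := by omega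
  have hsub1 : (m+1)*n - n = m*n := by
    have : (m+1)*n = m*n + n := by ring
    omega
  have hsub2 : (m+1)*n + 1 - n = m*n + 1 := by
    have : (m+1)*n = m*n + n := by ring
    omega
  have hc1 : ((((m+1)*n + 1).choose n : ℕ) : ℚ)
      = (Nat.factorial ((m+1)*n + 1) : ℚ)
        / ((Nat.factorial n : ℚ) * (Nat.factorial (m*n+1) : ℚ)) := by
    rw [Nat.cast_choose ℚ hle2, hsub2]
  have hc0 : ((((m+1)*n).choose n : ℕ) : ℚ)
      = (Nat.factorial ((m+1)*n) : ℚ)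
        / ((Nat.factorial n : ℚ) * (Nat.factorial (m*n) : ℚ)) := by
    rw [Nat.cast_choose ℚ hle1, hsub1]
  have hfac1 : (Nat.factorial ((m+1)*n + 1) : ℚ)
      = ((m+1)*n + 1 : ℚ) * (Nat.factorial ((m+1)*n) : ℚ) := by
    rw [Nat.factorial_succ]
    push_cast
    ring
  have hfac2 : (Nat.factorial (m*n + 1) : ℚ)
      = ((m : ℚ)*n + 1) * (Nat.factorial (m*n) : ℚ) := by
    rw [Nat.factorial_succ]
    push_cast
    ring
  have hkeyQ : (Nat.card {w : Fin ((m + 1) * n) → Bool // IsMAryPath m n w} : ℚ)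
      * (((m:ℚ)+1)*n + 1) = ((((m+1)*n + 1).choose n : ℕ) : ℚ) := by
    exact_mod_cast congrArg (fun x : ℕ => (x : ℚ)) key
  have hM : (((m:ℚ)+1)*n + 1) ≠ 0 := by positivity
  have hmn : ((m*n : ℚ) + 1) ≠ 0 := by positivity
  have hnf : (Nat.factorial n : ℚ) ≠ 0 := by
    exact_mod_cast (Nat.factorial_pos n).ne'
  have hmnf : (Nat.factorial (m*n) : ℚ) ≠ 0 := by
    exact_mod_cast (Nat.factorial_pos (m*n)).ne'
  have hcard : (Nat.card {w : Fin ((m + 1) * n) → Bool // IsMAryPath m n w} : ℚ)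
      = ((((m+1)*n + 1).choose n : ℕ) : ℚ) / (((m:ℚ)+1)*n + 1) := by
    field_simp at hkeyQ ⊢
    linarith [hkeyQ]
  rw [hcard, hc1, hfac1, hc0, hfac2]
  field_simp
end
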